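/- arXiv:2404.15494 — 5 statements merged into one kernel-verified Lean document; each statement's English description precedes it below -/
import Mathlib

section
/- Let n ≥ 2. The map ψ : (SP^n(ℂ)−Δ)/(ℂ⋊ℂ*) → ℙ(n, n−1, …, 2) sending the class of {z_1,…,z_n} to [a_0 : a_1 : … : a_{n−2}], where (a_0,…,a_{n−2}) are the coefficients (the coefficient a_{n−1} being automatically 0) of the monic polynomial (z − z_1 + B(z))⋯(z − z_n + B(z)) and B(z) = (z_1+…+z_n)/n is the barycenter, is a well-defined homeomorphism. -/
set_option linter.unnecessarySimpa false
set_option linter.unusedTactic false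
set_option maxHeartbeats 1000000

open Complex Topology Polynomial

/-- Permutation relation on `ℂ^n` defining the symmetric power `SP^n(ℂ)`. -/
def spRel (n : ℕ) (f g : Fin n → ℂ) : Prop :=
  ∃ σ : Equiv.Perm (Fin n), g = f ∘ σ

/-- The `n`-th symmetric power `SP^n(ℂ)` with the quotient topology. -/
abbrev SymPow (n : ℕ) : Type := Quot (spRel n)

/-- The diagonal of `SP^n(ℂ)`: classes of constant tuples. -/
def spDiag (n : ℕ) : Set (SymPow n) := {x | ∃ z : ℂ, x = Quot.mk _ (fun _ => z)}

/-- `SP^n(ℂ) − Δ` with the subspace topology. -/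
abbrev SymPowMinusDiag (n : ℕ) : Type := {x : SymPow n // x ∉ spDiag n}

/-- The affine group relation on `SP^n(ℂ) − Δ`: `d` is obtained from `c` by applying
`z ↦ b z + a` with `b ≠ 0` to every point. -/
def spAffRel (n : ℕ) (c d : SymPowMinusDiag n) : Prop :=
  ∃ a b : ℂ, b ≠ 0 ∧ ∃ f g : Fin n → ℂ,
    c.1 = Quot.mk _ f ∧ d.1 = Quot.mk _ g ∧ ∀ i, g i = b * f i + a

/-- `(SP^n(ℂ) − Δ)/(ℂ⋊ℂ*)` with the quotient topology. -/
abbrev SPModAff (n : ℕ) : Type := Quot (spAffRel n)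

/-- The weighted projective scaling relation on `ℂ^{n-1}∖{0}` with weights
`(n, n-1, …, 2)`: coordinate `i` (for `i = 0,…,n-2`) is scaled by `t^{n-i}`. -/
def wpRel (n : ℕ) (v w : {v : Fin (n - 1) → ℂ // v ≠ 0}) : Prop :=
  ∃ t : ℂ, t ≠ 0 ∧ ∀ i : Fin (n - 1), w.1 i = t ^ (n - i.1) * v.1 i

/-- The weighted projective space `ℙ(n, n-1, …, 2)` with the quotient topology. -/
abbrev WProj (n : ℕ) : Type := Quot (wpRel n)

/-! ### Auxiliary material -/

section Aux

private noncomputable def cLin : LinearOrder ℂ :=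
  LinearOrder.lift' (fun z => toLex (z.re, z.im)) (by
    intro a b h
    have := congrArg (ofLex) h
    exact Complex.ext (congrArg Prod.fst this) (congrArg Prod.snd this))

private theorem map_univ_comp_perm {n : ℕ} (f : Fin n → ℂ) (σ : Equiv.Perm (Fin n)) :
    Multiset.map (f ∘ σ) Finset.univ.val = Multiset.map f Finset.univ.val := by
  rw [← Multiset.map_map]
  congr 1
  have h0 : (Finset.univ.map σ.toEmbedding) = Finset.univ := Finset.map_univ_equiv σ
  have h1 := congrArg Finset.val h0
  rw [Finset.map_val] at h1
  exact h1

private theorem exists_perm_of_map_univ_eq {n : ℕ} {f g : Fin n → ℂ}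
    (h : Multiset.map f Finset.univ.val = Multiset.map g Finset.univ.val) :
    ∃ σ : Equiv.Perm (Fin n), f = g ∘ σ := by
  letI : LinearOrder ℂ := cLin
  have hs : f ∘ Tuple.sort f = g ∘ Tuple.sort g := by
    have h1 : Monotone (f ∘ Tuple.sort f) := Tuple.monotone_sort f
    have h2 : Monotone (g ∘ Tuple.sort g) := Tuple.monotone_sort g
    have hp : List.Perm (List.ofFn (f ∘ Tuple.sort f)) (List.ofFn (g ∘ Tuple.sort g)) := by
      rw [← Multiset.coe_eq_coe, ← Fin.univ_val_map, ← Fin.univ_val_map]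
      rw [map_univ_comp_perm, map_univ_comp_perm]
      exact h
    have := List.Perm.eq_of_sortedLE (List.sortedLE_ofFn_iff.mpr h1) (List.sortedLE_ofFn_iff.mpr h2) hp
    exact List.ofFn_inj.mp this
  refine ⟨((Tuple.sort f)⁻¹).trans (Tuple.sort g), ?_⟩
  funext i
  have := congrFun hs ((Tuple.sort f)⁻¹ i)
  simpa using this

/-! #### The polynomial with prescribed roots -/

private noncomputable def polyOf {n : ℕ} (g : Fin n → ℂ) : Polynomial ℂ := ∏ j, (X - C (g j))

private theorem polyOf_monic {n : ℕ} (g : Fin n → ℂ) : (polyOf g).Monic :=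
  monic_prod_of_monic _ _ fun j _ => monic_X_sub_C (g j)

private theorem polyOf_natDegree {n : ℕ} (g : Fin n → ℂ) : (polyOf g).natDegree = n := by
  rw [polyOf, natDegree_prod_of_monic _ _ fun j _ => monic_X_sub_C (g j)]
  simp

private theorem polyOf_coeff_natDegree {n : ℕ} (g : Fin n → ℂ) : (polyOf g).coeff n = 1 := by
  have := (polyOf_monic g).coeff_natDegree
  rwa [polyOf_natDegree] at this

private theorem polyOf_coeff_gt {n : ℕ} (g : Fin n → ℂ) {k : ℕ} (hk : n < k) :
    (polyOf g).coeff k = 0 :=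
  coeff_eq_zero_of_natDegree_lt (by rwa [polyOf_natDegree])

private theorem polyOf_comp_perm {n : ℕ} (g : Fin n → ℂ) (σ : Equiv.Perm (Fin n)) :
    polyOf (g ∘ σ) = polyOf g :=
  Equiv.prod_comp σ (fun j => X - C (g j))

private theorem polyOf_coeff_pred {n : ℕ} (hn : 0 < n) (g : Fin n → ℂ) :
    (polyOf g).coeff (n - 1) = -∑ j, g j := by
  have := prod_X_sub_C_coeff_card_pred Finset.univ g (by simpa using hn)
  simpa [polyOf] using this

private theorem polyOf_roots {n : ℕ} (g : Fin n → ℂ) :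
    (polyOf g).roots = Multiset.map g Finset.univ.val := by
  conv_rhs => rw [← roots_multiset_prod_X_sub_C (Multiset.map g Finset.univ.val)]
  congr 1
  rw [polyOf, Finset.prod_eq_multiset_prod, Multiset.map_map]
  rfl

private theorem exists_perm_of_polyOf_eq {n : ℕ} {f g : Fin n → ℂ}
    (h : polyOf f = polyOf g) : ∃ σ : Equiv.Perm (Fin n), f = g ∘ σ := by
  apply exists_perm_of_map_univ_eq
  rw [← polyOf_roots, ← polyOf_roots, h]

private theorem scaleRoots_X_sub_C' (a b : ℂ) :
    (X - C a).scaleRoots b = X - C (b * a) := by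
  ext i
  rcases i with _ | _ | i <;>
    simp [coeff_scaleRoots, natDegree_X_sub_C, coeff_sub, coeff_X, coeff_C, mul_comm]

private theorem scaleRoots_prod' {ι : Type*} (s : Finset ι) (g : ι → ℂ) (b : ℂ) :
    (∏ j ∈ s, (X - C (g j))).scaleRoots b = ∏ j ∈ s, (X - C (b * g j)) := by
  classical
  induction s using Finset.induction with
  | empty => simpa using one_scaleRoots b
  | insert _ _ h ih =>
      rw [Finset.prod_insert h, Finset.prod_insert h,
        mul_scaleRoots_of_noZeroDivisors, ih, scaleRoots_X_sub_C']

private theorem polyOf_scale_coeff {n : ℕ} (g : Fin n → ℂ) (b : ℂ) (i : ℕ) :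
    (polyOf (fun j => b * g j)).coeff i = b ^ (n - i) * (polyOf g).coeff i := by
  have h := scaleRoots_prod' Finset.univ g b
  have heq : polyOf (fun j => b * g j) = (polyOf g).scaleRoots b := by
    rw [polyOf, polyOf, h]
  rw [heq, coeff_scaleRoots, polyOf_natDegree, mul_comm]

private theorem polyOf_eval_root {n : ℕ} (g : Fin n → ℂ) (j : Fin n) :
    (polyOf g).eval (g j) = 0 := by
  rw [polyOf, eval_prod]
  apply Finset.prod_eq_zero (Finset.mem_univ j)
  simp

/-! #### The monic polynomial attached to a coefficient vector -/

private noncomputable def qpoly (n : ℕ) (v : Fin (n - 1) → ℂ) : Polynomial ℂ :=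
  X ^ n + ∑ i, C (v i) * X ^ (i : ℕ)

private theorem qpoly_sum_degree_lt (n : ℕ) (hn : 1 ≤ n) (v : Fin (n - 1) → ℂ) :
    (∑ i, C (v i) * X ^ (i : ℕ)).degree < (n : WithBot ℕ) := by
  apply lt_of_le_of_lt (degree_sum_le _ _)
  rw [Finset.sup_lt_iff (by exact_mod_cast WithBot.bot_lt_coe n)]
  intro i _
  apply lt_of_le_of_lt (degree_C_mul_X_pow_le _ _)
  exact_mod_cast (by omega : (i : ℕ) < n)

private theorem qpoly_monic (n : ℕ) (hn : 1 ≤ n) (v : Fin (n - 1) → ℂ) : (qpoly n v).Monic :=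
  monic_X_pow_add (qpoly_sum_degree_lt n hn v)

private theorem qpoly_natDegree (n : ℕ) (hn : 1 ≤ n) (v : Fin (n - 1) → ℂ) :
    (qpoly n v).natDegree = n := by
  have : (qpoly n v).degree = n := by
    rw [qpoly, degree_add_eq_left_of_degree_lt, degree_X_pow]
    rw [degree_X_pow]; exact qpoly_sum_degree_lt n hn v
  exact natDegree_eq_of_degree_eq_some this

private theorem qpoly_coeff_lt (n : ℕ) (v : Fin (n - 1) → ℂ) (i : Fin (n - 1)) :
    (qpoly n v).coeff i = v i := by
  rw [qpoly, coeff_add, coeff_X_pow, if_neg (by omega : ¬ (i : ℕ) = n)]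
  rw [finset_sum_coeff, Finset.sum_eq_single i]
  · simp
  · intro b _ hb
    rw [coeff_C_mul, coeff_X_pow, if_neg (fun h => hb (Fin.ext h.symm)), mul_zero]
  · simp

private theorem qpoly_coeff_pred (n : ℕ) (hn : 2 ≤ n) (v : Fin (n - 1) → ℂ) :
    (qpoly n v).coeff (n - 1) = 0 := by
  rw [qpoly, coeff_add, coeff_X_pow, if_neg (by omega : ¬ n - 1 = n)]
  rw [finset_sum_coeff, Finset.sum_eq_zero, zero_add]
  intro b _
  rw [coeff_C_mul, coeff_X_pow, if_neg (by omega : ¬ n - 1 = (b : ℕ)), mul_zero]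

private theorem qpoly_roots_card (n : ℕ) (hn : 1 ≤ n) (v : Fin (n - 1) → ℂ) :
    Multiset.card (qpoly n v).roots = n := by
  have hs : Splits (qpoly n v) := IsAlgClosed.splits _
  rw [splits_iff_card_roots] at hs
  rw [hs, qpoly_natDegree n hn v]

private noncomputable def rt (n : ℕ) (v : Fin (n - 1) → ℂ) : Fin n → ℂ :=
  fun j => ((qpoly n v).roots.toList).getD j 0

private theorem rt_map_univ (n : ℕ) (hn : 1 ≤ n) (v : Fin (n - 1) → ℂ) :
    Multiset.map (rt n v) Finset.univ.val = (qpoly n v).roots := by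
  have hlen : (qpoly n v).roots.toList.length = n := by
    rw [Multiset.length_toList, qpoly_roots_card n hn v]
  rw [Fin.univ_val_map, ← Multiset.coe_toList (qpoly n v).roots]
  rw [Multiset.coe_eq_coe]
  have : List.ofFn (rt n v) = (qpoly n v).roots.toList := by
    apply List.ext_getElem (by simp [hlen])
    intro i h1 h2
    simp only [List.getElem_ofFn, rt]
    rw [List.getD_eq_getElem _ _ (by omega)]
  rw [this]

private theorem qpoly_eq_polyOf_rt (n : ℕ) (hn : 1 ≤ n) (v : Fin (n - 1) → ℂ) :
    qpoly n v = polyOf (rt n v) := by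
  have h := prod_multiset_X_sub_C_of_monic_of_roots_card_eq (qpoly_monic n hn v)
    (by rw [qpoly_roots_card n hn v, qpoly_natDegree n hn v])
  rw [← h, polyOf, Finset.prod_eq_multiset_prod, ← rt_map_univ n hn v, Multiset.map_map]
  rfl

private theorem sum_rt_zero (n : ℕ) (hn : 2 ≤ n) (v : Fin (n - 1) → ℂ) :
    ∑ j, rt n v j = 0 := by
  have h1 : (polyOf (rt n v)).coeff (n - 1) = -∑ j, rt n v j :=
    polyOf_coeff_pred (by omega) _
  rw [← qpoly_eq_polyOf_rt n (by omega) v, qpoly_coeff_pred n hn v] at h1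
  linear_combination h1

private theorem qpoly_eq_polyOf_of_sum_zero {n : ℕ} (hn : 2 ≤ n) {g : Fin n → ℂ}
    (hs : ∑ j, g j = 0) :
    qpoly n (fun i => (polyOf g).coeff i.1) = polyOf g := by
  ext k
  rcases lt_or_ge k (n - 1) with hk | hk
  · exact qpoly_coeff_lt n _ ⟨k, hk⟩
  rcases Nat.lt_or_ge k n with hk2 | hk2
  · have hk3 : k = n - 1 := by omega
    subst hk3
    rw [qpoly_coeff_pred n hn, polyOf_coeff_pred (by omega) g, hs, neg_zero]
  rcases Nat.eq_or_lt_of_le hk2 with hk4 | hk4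
  · subst hk4
    rw [polyOf_coeff_natDegree]
    have := (qpoly_monic n (by omega) (fun i => (polyOf g).coeff i.1)).coeff_natDegree
    rwa [qpoly_natDegree n (by omega)] at this
  · rw [polyOf_coeff_gt g hk4, coeff_eq_zero_of_natDegree_lt]
    rwa [qpoly_natDegree n (by omega)]

/-! #### The coefficient vector map -/

private noncomputable def cvec (n : ℕ) (f : Fin n → ℂ) : Fin (n - 1) → ℂ :=
  fun i => (polyOf (fun j => f j - (∑ k, f k) / n)).coeff i.1

private theorem cvec_sum_zero {n : ℕ} {f : Fin n → ℂ} (hs : ∑ k, f k = 0) :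
    cvec n f = fun i => (polyOf f).coeff i.1 := by
  funext i
  simp [cvec, hs]

private theorem sum_center {n : ℕ} (hn : 0 < n) (f : Fin n → ℂ) :
    ∑ j, (f j - (∑ k, f k) / n) = 0 := by
  rw [Finset.sum_sub_distrib, Finset.sum_const, Finset.card_univ, Fintype.card_fin]
  have hnne : (n : ℂ) ≠ 0 := Nat.cast_ne_zero.mpr (by omega)
  rw [nsmul_eq_mul, mul_div_cancel₀ _ hnne, sub_self]

private theorem cvec_comp_perm {n : ℕ} (f : Fin n → ℂ) (σ : Equiv.Perm (Fin n)) :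
    cvec n (f ∘ σ) = cvec n f := by
  funext i
  have hsum : ∑ k, (f ∘ σ) k = ∑ k, f k := Equiv.sum_comp σ f
  simp only [cvec, hsum]
  congr 1
  exact polyOf_comp_perm (fun j => f j - (∑ k, f k) / n) σ

private theorem cvec_affine {n : ℕ} (hn : 2 ≤ n) {f g : Fin n → ℂ} {a b : ℂ}
    (hrel : ∀ i, g i = b * f i + a) (i : Fin (n - 1)) :
    cvec n g i = b ^ (n - i.1) * cvec n f i := by
  have hnne : (n : ℂ) ≠ 0 := Nat.cast_ne_zero.mpr (by omega)
  have hsum : ∑ k, g k = b * (∑ k, f k) + n * a := by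
    simp only [hrel]
    rw [Finset.sum_add_distrib, ← Finset.mul_sum, Finset.sum_const, Finset.card_univ,
      Fintype.card_fin, nsmul_eq_mul]
  have hcent : (fun j => g j - (∑ k, g k) / n) = fun j => b * (f j - (∑ k, f k) / n) := by
    funext j
    rw [hrel j, hsum]
    field_simp
    ring
  simp only [cvec, hcent]
  exact polyOf_scale_coeff (fun j => f j - (∑ k, f k) / n) b i.1

private theorem cvec_ne_zero {n : ℕ} (hn : 2 ≤ n) {f : Fin n → ℂ}
    (hf : ¬ ∃ z : ℂ, f = fun _ => z) : cvec n f ≠ 0 := by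
  intro h0
  apply hf
  set g : Fin n → ℂ := fun j => f j - (∑ k, f k) / n with hg
  have hsg : ∑ j, g j = 0 := sum_center (by omega) f
  have hq : qpoly n (fun i => (polyOf g).coeff i.1) = polyOf g :=
    qpoly_eq_polyOf_of_sum_zero hn hsg
  have hv0 : (fun i : Fin (n-1) => (polyOf g).coeff i.1) = 0 := by
    funext i
    have := congrFun h0 i
    simpa [cvec, hg] using this
  rw [hv0] at hq
  have hXn : qpoly n (0 : Fin (n-1) → ℂ) = X ^ n := by
    rw [qpoly]
    simp
  rw [hXn] at hq
  have hzero : ∀ j, g j = 0 := by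
    intro j
    have := polyOf_eval_root g j
    rw [← hq] at this
    simpa using pow_eq_zero_iff (by omega : n ≠ 0) |>.mp (by simpa using this)
  refine ⟨(∑ k, f k) / n, funext fun j => ?_⟩
  have := hzero j
  rw [hg] at this
  simp only [sub_eq_zero] at this
  exact this

private theorem cvec_rt (n : ℕ) (hn : 2 ≤ n) (v : Fin (n - 1) → ℂ) :
    cvec n (rt n v) = v := by
  rw [cvec_sum_zero (sum_rt_zero n hn v)]
  funext i
  rw [← qpoly_eq_polyOf_rt n (by omega) v, qpoly_coeff_lt]

private theorem cvec_zero {n : ℕ} (hn : 2 ≤ n) : cvec n (fun _ => (0:ℂ)) = 0 := by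
  rw [cvec_sum_zero (by simp)]
  funext i
  have : polyOf (fun _ : Fin n => (0:ℂ)) = X ^ n := by
    rw [polyOf]
    simp
  rw [this, coeff_X_pow, if_neg (by omega : ¬ (i : ℕ) = n)]
  rfl

private theorem rt_ne_zero {n : ℕ} (hn : 2 ≤ n) {v : Fin (n - 1) → ℂ} (hv : v ≠ 0) :
    ¬ ∃ z : ℂ, rt n v = fun _ => z := by
  rintro ⟨z, hz⟩
  have hs := sum_rt_zero n hn v
  rw [hz] at hs
  simp only [Finset.sum_const, Finset.card_univ, Fintype.card_fin, nsmul_eq_mul] at hs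
  have hz0 : z = 0 := by
    have hnne : (n : ℂ) ≠ 0 := Nat.cast_ne_zero.mpr (by omega)
    exact (mul_eq_zero.mp hs).resolve_left hnne
  apply hv
  have := cvec_rt n hn v
  rw [hz, hz0] at this
  rw [← this, cvec_zero hn]

end Aux

section Rel

private theorem spRel_equiv (n : ℕ) : Equivalence (spRel n) := by
  constructor
  · intro f; exact ⟨Equiv.refl _, rfl⟩
  · rintro f g ⟨σ, rfl⟩
    exact ⟨σ⁻¹, by funext i; simp⟩
  · rintro f g h ⟨σ, rfl⟩ ⟨τ, rfl⟩
    exact ⟨τ.trans σ, rfl⟩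

private theorem spRel_of_mk_eq {n : ℕ} {f g : Fin n → ℂ}
    (h : Quot.mk (spRel n) f = Quot.mk (spRel n) g) : spRel n f g :=
  ((spRel_equiv n).eqvGen_iff).mp (Quot.eqvGen_exact h)

private theorem mk_mem_spDiag_iff {n : ℕ} {f : Fin n → ℂ} :
    Quot.mk (spRel n) f ∈ spDiag n ↔ ∃ z : ℂ, f = fun _ => z := by
  constructor
  · rintro ⟨z, hz⟩
    obtain ⟨σ, hσ⟩ := spRel_of_mk_eq hz
    refine ⟨z, funext fun j => ?_⟩
    have := congrFun hσ (σ⁻¹ j)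
    simpa using this.symm
  · rintro ⟨z, rfl⟩
    exact ⟨z, rfl⟩

end Rel

section Topology

private theorem coeff_X_sub_C_mul' (a : ℂ) (P : Polynomial ℂ) (k : ℕ) :
    ((X - C a) * P).coeff k = (if k = 0 then 0 else P.coeff (k - 1)) - a * P.coeff k := by
  rw [sub_mul, coeff_sub, coeff_C_mul]
  congr 1
  cases k with
  | zero => simp [coeff_zero_eq_eval_zero]
  | succ m => rw [if_neg (Nat.succ_ne_zero m), coeff_X_mul]; rfl

private theorem continuous_prod_coeff {α : Type*} [TopologicalSpace α] {ι : Type*}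
    (s : Finset ι) (e : α → ι → ℂ) (he : ∀ j, Continuous fun x => e x j) :
    ∀ k : ℕ, Continuous fun x => (∏ j ∈ s, (X - C (e x j))).coeff k := by
  classical
  induction s using Finset.induction with
  | empty => intro k; simpa using continuous_const
  | @insert j s hj ih =>
      intro k
      have heq : (fun x => (∏ j' ∈ insert j s, (X - C (e x j'))).coeff k) =
          fun x => (if k = 0 then 0 else (∏ j' ∈ s, (X - C (e x j'))).coeff (k - 1))
            - e x j * (∏ j' ∈ s, (X - C (e x j'))).coeff k := by
        funext x
        rw [Finset.prod_insert hj, coeff_X_sub_C_mul']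
      rw [heq]
      apply Continuous.sub
      · split
        · exact continuous_const
        · exact ih (k - 1)
      · exact (he j).mul (ih k)

private theorem continuous_cvec (n : ℕ) : Continuous (cvec n) := by
  apply continuous_pi
  intro i
  have hcont : ∀ j : Fin n, Continuous fun (f : Fin n → ℂ) => f j - (∑ k, f k) / n := by
    intro j
    apply (continuous_apply j).sub
    exact (continuous_finset_sum _ fun k _ => continuous_apply k).div_const _
  have := continuous_prod_coeff (α := (Fin n → ℂ)) Finset.univ
    (fun f j => f j - (∑ k, f k) / n) hcont i.1
  exact this

private theorem root_norm_le {n : ℕ} (hn : 1 ≤ n) {P : Polynomial ℂ} (hP : P.Monic)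
    (hd : P.natDegree = n) {M : ℝ} (hM : 0 ≤ M)
    (hc : ∀ i < n, ‖P.coeff i‖ ≤ M) {z : ℂ} (hz : P.eval z = 0) :
    ‖z‖ ≤ 1 + n * M := by
  by_cases h1 : ‖z‖ ≤ 1
  · nlinarith [mul_nonneg (Nat.cast_nonneg (α := ℝ) n) hM]
  push_neg at h1
  have hzpos : (0:ℝ) < ‖z‖ := lt_trans zero_lt_one h1
  have key : ‖z‖ ^ n ≤ n * M * ‖z‖ ^ (n - 1) := by
    have he : z ^ n + ∑ i ∈ Finset.range n, P.coeff i * z ^ i = 0 := by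
      have := eval_eq_sum_range (p := P) z
      rw [hz] at this
      rw [hd] at this
      rw [Finset.sum_range_succ] at this
      rw [← hd, Monic.coeff_natDegree hP, hd] at this
      rw [one_mul] at this
      linear_combination -this
    have hzn : z ^ n = -(∑ i ∈ Finset.range n, P.coeff i * z ^ i) := by linear_combination he
    calc ‖z‖ ^ n = ‖z ^ n‖ := (norm_pow z n).symm
      _ = ‖∑ i ∈ Finset.range n, P.coeff i * z ^ i‖ := by rw [hzn, norm_neg]
      _ ≤ ∑ i ∈ Finset.range n, ‖P.coeff i * z ^ i‖ := norm_sum_le _ _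
      _ ≤ ∑ i ∈ Finset.range n, M * ‖z‖ ^ (n - 1) := by
          apply Finset.sum_le_sum
          intro i hi
          rw [norm_mul, norm_pow]
          have h2 : ‖z‖ ^ i ≤ ‖z‖ ^ (n - 1) :=
            pow_le_pow_right₀ (le_of_lt h1) (by
              have := Finset.mem_range.mp hi; omega)
          exact mul_le_mul (hc i (Finset.mem_range.mp hi)) h2
            (pow_nonneg (norm_nonneg z) i) hM
      _ = n * M * ‖z‖ ^ (n - 1) := by
          rw [Finset.sum_const, Finset.card_range]; push_cast; ring
  have hpow : ‖z‖ ^ n = ‖z‖ * ‖z‖ ^ (n - 1) := by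
    rw [← pow_succ']
    congr 1
    omega
  rw [hpow] at key
  have hp : (0:ℝ) < ‖z‖ ^ (n-1) := pow_pos hzpos _
  have hle : ‖z‖ ≤ n * M := (mul_le_mul_iff_left₀ hp).mp key
  linarith

end Topology
section Assemble

private theorem qpoly_coeff_natDeg (n : ℕ) (hn : 1 ≤ n) (v : Fin (n - 1) → ℂ) :
    (qpoly n v).coeff n = 1 := by
  have := (qpoly_monic n hn v).coeff_natDegree
  rwa [qpoly_natDegree n hn v] at this

private theorem qpoly_coeff_gt (n : ℕ) (hn : 1 ≤ n) (v : Fin (n - 1) → ℂ) {k : ℕ}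
    (h : n < k) : (qpoly n v).coeff k = 0 :=
  coeff_eq_zero_of_natDegree_lt (by rwa [qpoly_natDegree n hn v])

private theorem qpoly_scale (n : ℕ) (hn : 2 ≤ n) (v w : Fin (n - 1) → ℂ) (t : ℂ)
    (hrel : ∀ i : Fin (n - 1), w i = t ^ (n - i.1) * v i) :
    qpoly n w = polyOf (fun j => t * rt n v j) := by
  ext k
  rw [polyOf_scale_coeff (rt n v) t k, ← qpoly_eq_polyOf_rt n (by omega) v]
  rcases lt_or_ge k (n - 1) with hk | hk
  · rw [qpoly_coeff_lt n w ⟨k, hk⟩, qpoly_coeff_lt n v ⟨k, hk⟩]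
    exact hrel ⟨k, hk⟩
  rcases Nat.lt_or_ge k n with hk2 | hk2
  · have hk3 : k = n - 1 := by omega
    subst hk3
    rw [qpoly_coeff_pred n hn w, qpoly_coeff_pred n hn v, mul_zero]
  rcases Nat.eq_or_lt_of_le hk2 with hk4 | hk4
  · subst hk4
    rw [qpoly_coeff_natDeg n (by omega) w, qpoly_coeff_natDeg n (by omega) v,
      Nat.sub_self, pow_zero, one_mul]
  · rw [qpoly_coeff_gt n (by omega) w hk4, qpoly_coeff_gt n (by omega) v hk4, mul_zero]

private theorem not_const_of_sum_zero {n : ℕ} (hn : 2 ≤ n) {g : Fin n → ℂ}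
    (h0 : ∑ j, g j = 0) (hne : g ≠ 0) : ¬ ∃ z : ℂ, g = fun _ => z := by
  rintro ⟨z, rfl⟩
  simp only [Finset.sum_const, Finset.card_univ, Fintype.card_fin, nsmul_eq_mul] at h0
  have hz : z = 0 := (mul_eq_zero.mp h0).resolve_left (Nat.cast_ne_zero.mpr (by omega))
  exact hne (by funext j; simp [hz])

/-- The Vieta map on the centered, punctured hyperplane. -/
private noncomputable def pmap (n : ℕ) (hn : 2 ≤ n)
    (g : {g : Fin n → ℂ // (∑ j, g j = 0) ∧ g ≠ 0}) : {v : Fin (n - 1) → ℂ // v ≠ 0} :=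
  ⟨cvec n g.1, cvec_ne_zero hn (not_const_of_sum_zero hn g.2.1 g.2.2)⟩

private theorem rt_ne_zero' {n : ℕ} (hn : 2 ≤ n) {v : Fin (n - 1) → ℂ} (hv : v ≠ 0) :
    rt n v ≠ 0 := fun h => rt_ne_zero hn hv ⟨0, by rw [h]; rfl⟩

private theorem pmap_surjective (n : ℕ) (hn : 2 ≤ n) : Function.Surjective (pmap n hn) := by
  intro v
  refine ⟨⟨rt n v.1, sum_rt_zero n hn v.1, rt_ne_zero' hn v.2⟩, ?_⟩
  exact Subtype.ext (cvec_rt n hn v.1)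

private theorem pmap_continuous (n : ℕ) (hn : 2 ≤ n) : Continuous (pmap n hn) :=
  Continuous.subtype_mk ((continuous_cvec n).comp continuous_subtype_val) _

private theorem pmap_isCompact_preimage (n : ℕ) (hn : 2 ≤ n)
    {K : Set {v : Fin (n - 1) → ℂ // v ≠ 0}} (hK : IsCompact K) :
    IsCompact (pmap n hn ⁻¹' K) := by
  have hK' : IsCompact (Subtype.val '' K) := hK.image continuous_subtype_val
  obtain ⟨r, hr⟩ := hK'.isBounded.subset_closedBall 0
  set M : ℝ := max r 0 with hM
  have hM0 : 0 ≤ M := le_max_right r 0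
  set B : Set (Fin n → ℂ) :=
    {x | (∑ j, x j = 0) ∧ cvec n x ∈ Subtype.val '' K} with hB
  have himg : Subtype.val '' (pmap n hn ⁻¹' K) = B := by
    ext x
    constructor
    · rintro ⟨g, hg, rfl⟩
      exact ⟨g.2.1, ⟨pmap n hn g, hg, rfl⟩⟩
    · rintro ⟨hx1, ⟨k, hk, hkx⟩⟩
      have hxne : x ≠ 0 := by
        intro h0
        apply k.2
        rw [hkx, h0]
        exact cvec_zero hn
      refine ⟨⟨x, hx1, hxne⟩, ?_, rfl⟩
      have hpk : pmap n hn ⟨x, hx1, hxne⟩ = k := Subtype.ext (by simpa [pmap] using hkx.symm)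
      exact Set.mem_preimage.mpr (by rw [hpk]; exact hk)
  have hBclosed : IsClosed B := by
    apply IsClosed.inter
    · exact isClosed_eq (continuous_finset_sum _ fun k _ => continuous_apply k) continuous_const
    · exact IsClosed.preimage (continuous_cvec n) hK'.isClosed
  have hBsub : B ⊆ Metric.closedBall 0 (1 + n * M) := by
    intro x hx
    obtain ⟨hx1, hx2⟩ := hx
    rw [Metric.mem_closedBall, dist_zero_right]
    have hRnn : (0:ℝ) ≤ 1 + n * M := by positivity
    rw [pi_norm_le_iff_of_nonneg hRnn]
    intro j
    have hcv : cvec n x = fun i => (polyOf x).coeff i.1 := cvec_sum_zero hx1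
    have hnorm : ‖cvec n x‖ ≤ M := by
      obtain ⟨k, hk, hkx⟩ := hx2
      have := hr ⟨k, hk, hkx⟩
      rw [Metric.mem_closedBall, dist_zero_right] at this
      exact le_trans this (le_max_left r 0)
    apply root_norm_le (by omega : 1 ≤ n) (polyOf_monic x) (polyOf_natDegree x) hM0
      ?_ (polyOf_eval_root x j)
    intro i hi
    rcases lt_or_ge i (n - 1) with hilt | hige
    · have : (polyOf x).coeff i = cvec n x ⟨i, hilt⟩ := by rw [hcv]
      rw [this]
      exact le_trans (norm_le_pi_norm (cvec n x) ⟨i, hilt⟩) hnorm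
    · have hieq : i = n - 1 := by omega
      subst hieq
      rw [polyOf_coeff_pred (by omega) x, hx1, neg_zero, norm_zero]
      exact hM0
  have hBcompact : IsCompact B :=
    (isCompact_closedBall 0 (1 + n * M)).of_isClosed_subset hBclosed hBsub
  rw [Topology.IsEmbedding.subtypeVal.isCompact_iff, himg]
  exact hBcompact

private theorem pmap_isQuotientMap (n : ℕ) (hn : 2 ≤ n) : IsQuotientMap (pmap n hn) := by
  have hproper : IsProperMap (pmap n hn) :=
    isProperMap_iff_isCompact_preimage.mpr
      ⟨pmap_continuous n hn, fun K hK => pmap_isCompact_preimage n hn hK⟩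
  exact hproper.isClosedMap.isQuotientMap (pmap_continuous n hn) (pmap_surjective n hn)

/-! #### The forward map -/

private theorem cvec_perm_lift (n : ℕ) : ∀ f g, spRel n f g → cvec n f = cvec n g := by
  rintro f g ⟨σ, rfl⟩
  exact (cvec_comp_perm f σ).symm

private noncomputable def symCvec (n : ℕ) : SymPow n → (Fin (n - 1) → ℂ) :=
  Quot.lift (cvec n) (cvec_perm_lift n)

private theorem symCvec_ne_zero (n : ℕ) (hn : 2 ≤ n) :
    ∀ q : SymPow n, q ∉ spDiag n → symCvec n q ≠ 0 := by
  intro q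
  induction q using Quot.ind with
  | _ f => exact fun hq => cvec_ne_zero hn (fun hex => hq (mk_mem_spDiag_iff.mpr hex))

private noncomputable def phiSub (n : ℕ) (hn : 2 ≤ n) (x : SymPowMinusDiag n) :
    {v : Fin (n - 1) → ℂ // v ≠ 0} :=
  ⟨symCvec n x.1, symCvec_ne_zero n hn x.1 x.2⟩

private theorem phiSub_aff (n : ℕ) (hn : 2 ≤ n) : ∀ c d, spAffRel n c d →
    Quot.mk (wpRel n) (phiSub n hn c) = Quot.mk (wpRel n) (phiSub n hn d) := by
  rintro c d ⟨a, b, hb, f, g, hc, hd, hrel⟩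
  apply Quot.sound
  refine ⟨b, hb, fun i => ?_⟩
  have h1 : (phiSub n hn c).1 = cvec n f := by
    show symCvec n c.1 = cvec n f
    rw [hc]
    rfl
  have h2 : (phiSub n hn d).1 = cvec n g := by
    show symCvec n d.1 = cvec n g
    rw [hd]
    rfl
  rw [h1, h2]
  exact cvec_affine hn hrel i

private noncomputable def phi (n : ℕ) (hn : 2 ≤ n) : SPModAff n → WProj n :=
  Quot.lift (fun x => Quot.mk (wpRel n) (phiSub n hn x)) (phiSub_aff n hn)

private theorem phi_continuous (n : ℕ) (hn : 2 ≤ n) : Continuous (phi n hn) := by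
  rw [isQuotientMap_quot_mk.continuous_iff]
  apply continuous_quot_mk.comp
  apply Continuous.subtype_mk
  have hsym : Continuous (symCvec n) :=
    continuous_quot_lift (cvec_perm_lift n) (continuous_cvec n)
  exact hsym.comp continuous_subtype_val

/-! #### The inverse map -/

private theorem rt_not_diag (n : ℕ) (hn : 2 ≤ n) {v : Fin (n - 1) → ℂ} (hv : v ≠ 0) :
    Quot.mk (spRel n) (rt n v) ∉ spDiag n :=
  fun h => rt_ne_zero hn hv (mk_mem_spDiag_iff.mp h)

private noncomputable def psiSub (n : ℕ) (hn : 2 ≤ n) (v : {v : Fin (n - 1) → ℂ // v ≠ 0}) :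
    SPModAff n :=
  Quot.mk (spAffRel n) ⟨Quot.mk (spRel n) (rt n v.1), rt_not_diag n hn v.2⟩

private theorem spmod_eq_of_polyOf (n : ℕ) {f h : Fin n → ℂ}
    (hf : Quot.mk (spRel n) f ∉ spDiag n) (hh : Quot.mk (spRel n) h ∉ spDiag n)
    {a b : ℂ} (hb : b ≠ 0) (heq : polyOf h = polyOf (fun j => b * f j + a)) :
    Quot.mk (spAffRel n) ⟨Quot.mk (spRel n) f, hf⟩ =
      Quot.mk (spAffRel n) ⟨Quot.mk (spRel n) h, hh⟩ := by
  obtain ⟨σ, hσ⟩ := exists_perm_of_polyOf_eq heq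
  apply Quot.sound
  refine ⟨a, b, hb, f ∘ σ, h, ?_, rfl, fun i => ?_⟩
  · exact Quot.sound ⟨σ, rfl⟩
  · exact congrFun hσ i

private theorem psiSub_wp (n : ℕ) (hn : 2 ≤ n) : ∀ v w, wpRel n v w →
    psiSub n hn v = psiSub n hn w := by
  rintro v w ⟨t, ht, hrel⟩
  apply spmod_eq_of_polyOf n (a := 0) (rt_not_diag n hn v.2) (rt_not_diag n hn w.2) ht
  rw [← qpoly_eq_polyOf_rt n (by omega) w.1, qpoly_scale n hn v.1 w.1 t hrel]
  congr 1
  funext j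
  ring

private noncomputable def psi (n : ℕ) (hn : 2 ≤ n) : WProj n → SPModAff n :=
  Quot.lift (psiSub n hn) (psiSub_wp n hn)

/-- The centered polynomial identity used for both inverse laws. -/
private theorem polyOf_rt_cvec {n : ℕ} (hn : 2 ≤ n) (f : Fin n → ℂ) :
    polyOf (rt n (cvec n f)) = polyOf (fun j => f j - (∑ k, f k) / n) := by
  rw [← qpoly_eq_polyOf_rt n (by omega) (cvec n f)]
  exact qpoly_eq_polyOf_of_sum_zero hn (sum_center (by omega) f)

private theorem psi_phi_mk (n : ℕ) (hn : 2 ≤ n) (f : Fin n → ℂ)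
    (hf : Quot.mk (spRel n) f ∉ spDiag n) :
    psi n hn (phi n hn (Quot.mk (spAffRel n) ⟨Quot.mk (spRel n) f, hf⟩)) =
      Quot.mk (spAffRel n) ⟨Quot.mk (spRel n) f, hf⟩ := by
  have hstep : psi n hn (phi n hn (Quot.mk (spAffRel n) ⟨Quot.mk (spRel n) f, hf⟩)) =
      Quot.mk (spAffRel n) ⟨Quot.mk (spRel n) (rt n (cvec n f)),
        rt_not_diag n hn (symCvec_ne_zero n hn _ hf)⟩ := rfl
  rw [hstep]
  refine (spmod_eq_of_polyOf n (a := -((∑ k, f k) / n)) (b := 1) hf _ one_ne_zero ?_).symm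
  rw [polyOf_rt_cvec hn f]
  congr 1
  funext j
  ring

private theorem phi_psi_mk (n : ℕ) (hn : 2 ≤ n) (v : {v : Fin (n - 1) → ℂ // v ≠ 0}) :
    phi n hn (psi n hn (Quot.mk (wpRel n) v)) = Quot.mk (wpRel n) v := by
  have hstep : phi n hn (psi n hn (Quot.mk (wpRel n) v)) =
      Quot.mk (wpRel n) ⟨cvec n (rt n v.1), _⟩ := rfl
  rw [hstep]
  exact congrArg _ (Subtype.ext (cvec_rt n hn v.1))

end Assemble
section Final

private theorem psiSub_pmap (n : ℕ) (hn : 2 ≤ n)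
    (g : {g : Fin n → ℂ // (∑ j, g j = 0) ∧ g ≠ 0}) :
    psiSub n hn (pmap n hn g) =
      Quot.mk (spAffRel n) ⟨Quot.mk (spRel n) g.1,
        fun h => not_const_of_sum_zero hn g.2.1 g.2.2 (mk_mem_spDiag_iff.mp h)⟩ := by
  refine (spmod_eq_of_polyOf n (a := 0) (b := 1) _ _ one_ne_zero ?_).symm
  show polyOf (rt n (cvec n g.1)) = _
  rw [polyOf_rt_cvec hn g.1]
  congr 1
  funext j
  rw [g.2.1]
  simp

private theorem psi_continuous (n : ℕ) (hn : 2 ≤ n) : Continuous (psi n hn) := by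
  rw [isQuotientMap_quot_mk.continuous_iff]
  have h1 : psi n hn ∘ Quot.mk (wpRel n) = psiSub n hn := rfl
  rw [h1, (pmap_isQuotientMap n hn).continuous_iff]
  have h2 : psiSub n hn ∘ pmap n hn = fun g => Quot.mk (spAffRel n)
      ⟨Quot.mk (spRel n) g.1,
        fun h => not_const_of_sum_zero hn g.2.1 g.2.2 (mk_mem_spDiag_iff.mp h)⟩ :=
    funext (psiSub_pmap n hn)
  rw [h2]
  exact continuous_quot_mk.comp
    (Continuous.subtype_mk (continuous_quot_mk.comp continuous_subtype_val) _)

end Final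

/-- The map `ψ : (SP^n(ℂ)−Δ)/(ℂ⋊ℂ*) → ℙ(n, n−1, …, 2)` sending the class of
`{z_1,…,z_n}` to `[a_0 : … : a_{n−2}]`, where the `a_i` are the coefficients of the monic
polynomial `∏_j (z − z_j + B(z))` with `B(z)` the barycenter, is a well-defined
homeomorphism. -/
theorem spModAff_homeo_wproj (n : ℕ) (hn : 2 ≤ n) :
    ∃ h : SPModAff n ≃ₜ WProj n,
      ∀ (f : Fin n → ℂ) (hf : Quot.mk (spRel n) f ∉ spDiag n)
        (v : {v : Fin (n - 1) → ℂ // v ≠ 0}),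
        (∀ i : Fin (n - 1),
          v.1 i = (∏ j, (X - C (f j) + C ((∑ k, f k) / (n : ℂ)))).coeff i.1) →
        h (Quot.mk _ ⟨Quot.mk _ f, hf⟩) = Quot.mk _ v := by
  refine ⟨⟨⟨phi n hn, psi n hn, ?_, ?_⟩, phi_continuous n hn, psi_continuous n hn⟩, ?_⟩
  · intro x
    induction x using Quot.ind with
    | _ c =>
      obtain ⟨q, hq⟩ := c
      revert hq
      induction q using Quot.ind with
      | _ f => intro hq; exact psi_phi_mk n hn f hq
  · intro y
    induction y using Quot.ind with
    | _ v => exact phi_psi_mk n hn v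
  · intro f hf v hv
    have hv' : v = ⟨cvec n f, symCvec_ne_zero n hn _ hf⟩ := by
      apply Subtype.ext
      funext i
      rw [hv i]
      show (∏ j, (X - C (f j) + C ((∑ k, f k) / (n : ℂ)))).coeff i.1 =
        (polyOf (fun j => f j - (∑ k, f k) / (n : ℂ))).coeff i.1
      congr 1
      rw [polyOf]
      congr 1
      funext j
      rw [map_sub]
      ring
    rw [hv']
    rfl
end

section
/- For every n ≥ 2 there is a topological embedding of C_n(ℂ)/(ℂ⋊ℂ*) into the weighted projective space ℙ(n, n−1, …, 2) whose image is open and dense; concretely, it sends the class of a configuration {z_1,…,z_n} to [a_0 : … : a_{n−2}], where the a_i are the coefficients of the monic polynomial ∏_j (z − z_j + B(z)) and B(z) is the barycenter of the configuration. -/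
open Complex Topology Polynomial

/-- Ordered configuration space of `n` points in the subset `X ⊆ ℂ`. -/
abbrev OrdConfig (n : ℕ) (X : Set ℂ) : Type :=
  {f : Fin n → ℂ // Function.Injective f ∧ ∀ i, f i ∈ X}

/-- Two ordered configurations are related if they differ by a permutation of labels. -/
def permRel (n : ℕ) (X : Set ℂ) (f g : OrdConfig n X) : Prop :=
  ∃ σ : Equiv.Perm (Fin n), g.1 = f.1 ∘ σ

/-- The unordered configuration space `C_n(X)` with the quotient topology. -/
abbrev UConfig (n : ℕ) (X : Set ℂ) : Type := Quot (permRel n X)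

/-- The affine group relation on unordered configurations: `d` is obtained from `c` by
applying `z ↦ b z + a` with `b ≠ 0` to every point. -/
def affRel (n : ℕ) (c d : UConfig n Set.univ) : Prop :=
  ∃ a b : ℂ, b ≠ 0 ∧ ∃ f g : OrdConfig n Set.univ,
    Quot.mk _ f = c ∧ Quot.mk _ g = d ∧ ∀ i, g.1 i = b * f.1 i + a

/-- `C_n(ℂ)/(ℂ⋊ℂ*)`, the orbit space with the quotient topology. -/
abbrev ConfigModAff (n : ℕ) : Type := Quot (affRel n)

noncomputable section
namespace ConfigWP
open Finset Function NNReal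

/-- The monic polynomial with roots `z`. -/
def Pz (n : ℕ) (z : Fin n → ℂ) : Polynomial ℂ := ∏ j, (X - C (z j))

lemma Pz_monic (n : ℕ) (z : Fin n → ℂ) : (Pz n z).Monic :=
  monic_prod_of_monic _ _ fun _ _ => monic_X_sub_C _

lemma Pz_eq_multiset (n : ℕ) (z : Fin n → ℂ) :
    Pz n z = ((Finset.univ.val.map z).map fun r => X - C r).prod := by
  rw [Pz, Finset.prod_eq_multiset_prod, Multiset.map_map]
  rfl

lemma Pz_natDegree (n : ℕ) (z : Fin n → ℂ) : (Pz n z).natDegree = n := by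
  rw [Pz_eq_multiset, natDegree_multiset_prod_X_sub_C_eq_card, Multiset.card_map]
  simp

lemma Pz_roots (n : ℕ) (z : Fin n → ℂ) : (Pz n z).roots = Finset.univ.val.map z := by
  rw [Pz_eq_multiset, roots_multiset_prod_X_sub_C]

lemma Pz_coeff (n : ℕ) (z : Fin n → ℂ) {k : ℕ} (hk : k ≤ n) :
    (Pz n z).coeff k =
      (-1 : ℂ) ^ (n - k) * ∑ t ∈ Finset.univ.powersetCard (n - k), ∏ j ∈ t, z j := by
  rw [Pz_eq_multiset, Multiset.prod_X_sub_C_coeff _ (by simpa using hk)]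
  rw [Finset.esymm_map_val]
  congr 2 <;> simp

lemma Pz_eval (n : ℕ) (z : Fin n → ℂ) (x : ℂ) :
    (Pz n z).eval x = ∏ j, (x - z j) := by
  simp [Pz, eval_prod]

lemma Pz_comp_perm (n : ℕ) (z : Fin n → ℂ) (σ : Equiv.Perm (Fin n)) :
    Pz n (z ∘ σ) = Pz n z := by
  rw [Pz, Pz]
  exact Fintype.prod_equiv σ _ _ fun j => rfl

lemma Pz_smul_coeff (n : ℕ) (z : Fin n → ℂ) (b : ℂ) {k : ℕ} (hk : k ≤ n) :
    (Pz n (fun j => b * z j)).coeff k = b ^ (n - k) * (Pz n z).coeff k := by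
  rw [Pz_coeff n _ hk, Pz_coeff n z hk]
  rw [Finset.mul_sum, Finset.mul_sum, Finset.mul_sum]
  refine Finset.sum_congr rfl fun t ht => ?_
  have hct : t.card = n - k := (Finset.mem_powersetCard.mp ht).2
  rw [Finset.prod_mul_distrib, Finset.prod_const, hct]
  ring


/-- The coefficient tuple of `Pz n z` (coefficients `0,…,n-1`; the leading one is `1`). -/
def Phi (n : ℕ) (z : Fin n → ℂ) : Fin n → ℂ := fun i => (Pz n z).coeff i

lemma continuous_Pz_coeff (n : ℕ) (k : ℕ) (hk : k ≤ n) :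
    Continuous fun z : Fin n → ℂ => (Pz n z).coeff k := by
  have : (fun z : Fin n → ℂ => (Pz n z).coeff k) =
      fun z => (-1 : ℂ) ^ (n - k) *
        ∑ t ∈ Finset.univ.powersetCard (n - k), ∏ j ∈ t, z j := by
    funext z; exact Pz_coeff n z hk
  rw [this]
  exact continuous_const.mul <| continuous_finset_sum _ fun t _ =>
    continuous_finset_prod _ fun j _ => continuous_apply j

lemma continuous_Phi (n : ℕ) : Continuous (Phi n) :=
  continuous_pi fun i => continuous_Pz_coeff n i (le_of_lt i.2)

/-- Two monic polynomials of the same degree with equal lower coefficients are equal. -/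
lemma monic_ext {p q : Polynomial ℂ} {n : ℕ} (hp : p.Monic) (hq : q.Monic)
    (hdp : p.natDegree = n) (hdq : q.natDegree = n)
    (h : ∀ k < n, p.coeff k = q.coeff k) : p = q := by
  ext k
  rcases lt_trichotomy k n with hk | hk | hk
  · exact h k hk
  · subst hk
    rw [← hdp, hp.coeff_natDegree, hdp, ← hdq, hq.coeff_natDegree]
  · rw [coeff_eq_zero_of_natDegree_lt (hdp ▸ hk), coeff_eq_zero_of_natDegree_lt (hdq ▸ hk)]

/-- The monic polynomial with coefficient tuple `a`. -/
def Q (n : ℕ) (a : Fin n → ℂ) : Polynomial ℂ := X ^ n + ∑ i : Fin n, C (a i) * X ^ (i : ℕ)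

lemma Q_degree_lt (n : ℕ) (a : Fin n → ℂ) :
    (∑ i : Fin n, C (a i) * X ^ (i : ℕ)).degree < (n : WithBot ℕ) := by
  apply lt_of_le_of_lt (degree_sum_le _ _)
  rw [Finset.sup_lt_iff (by exact_mod_cast WithBot.bot_lt_coe n)]
  intro i _
  apply lt_of_le_of_lt (degree_C_mul_X_pow_le _ _)
  exact_mod_cast i.2

lemma Q_monic (n : ℕ) (a : Fin n → ℂ) : (Q n a).Monic := by
  have h := Q_degree_lt n a
  rw [Q]
  exact monic_X_pow_add h

lemma Q_natDegree (n : ℕ) (a : Fin n → ℂ) : (Q n a).natDegree = n := by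
  have h : (Q n a).degree = n := by
    rw [Q, degree_add_eq_left_of_degree_lt (by simpa [degree_X_pow] using Q_degree_lt n a),
      degree_X_pow]
  exact natDegree_eq_of_degree_eq_some h

lemma Q_coeff (n : ℕ) (a : Fin n → ℂ) (i : Fin n) : (Q n a).coeff i = a i := by
  rw [Q, coeff_add, coeff_X_pow, if_neg (by exact Nat.ne_of_lt i.2)]
  rw [finset_sum_coeff]
  rw [Finset.sum_eq_single i]
  · simp
  · intro b _ hb
    rw [coeff_C_mul, coeff_X_pow, if_neg (fun hh => hb (Fin.ext hh.symm)), mul_zero]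
  · simp

lemma Q_Phi (n : ℕ) (z : Fin n → ℂ) : Q n (Phi n z) = Pz n z := by
  refine (monic_ext (Q_monic n _) (Pz_monic n z) (Q_natDegree n _) (Pz_natDegree n z)
    fun k hk => ?_).symm.symm
  rw [Q_coeff n _ ⟨k, hk⟩]
  rfl

lemma Phi_surjective (n : ℕ) : Function.Surjective (Phi n) := by
  intro a
  have hmonic := Q_monic n a
  have hsplit : (Q n a).Splits := IsAlgClosed.splits _
  have hprod := hsplit.eq_prod_roots_of_monic hmonic
  have hcard : Multiset.card (Q n a).roots = n := by
    have := congrArg Polynomial.natDegree hprod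
    rwa [Q_natDegree, natDegree_multiset_prod_X_sub_C_eq_card, eq_comm] at this
  set l := (Q n a).roots.toList with hl
  have hlen : l.length = n := by rw [hl, Multiset.length_toList, hcard]
  refine ⟨fun j => l.get (Fin.cast hlen.symm j), ?_⟩
  have hmap : Finset.univ.val.map (fun j : Fin n => l.get (Fin.cast hlen.symm j))
      = (Q n a).roots := by
    have : Finset.univ.val.map (fun j : Fin n => l.get (Fin.cast hlen.symm j))
        = ↑(List.ofFn fun j : Fin n => l.get (Fin.cast hlen.symm j)) := by
      rw [List.ofFn_eq_map]
      rfl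
    rw [this]
    have : (List.ofFn fun j : Fin n => l.get (Fin.cast hlen.symm j)) = l := by
      apply List.ext_get (by simp [hlen])
      intro i h1 h2
      simp
    rw [this, hl, Multiset.coe_toList]
  funext i
  show (Pz n _).coeff i = a i
  rw [Pz_eq_multiset, hmap, ← hprod, Q_coeff]

lemma Pz_eq_iff_multiset (n : ℕ) {z w : Fin n → ℂ} (h : Pz n z = Pz n w) :
    Finset.univ.val.map z = Finset.univ.val.map w := by
  have := congrArg Polynomial.roots h
  rwa [Pz_roots, Pz_roots] at this

lemma injective_iff_of_Pz_eq (n : ℕ) {z w : Fin n → ℂ} (h : Pz n z = Pz n w) :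
    Function.Injective z ↔ Function.Injective w := by
  have hm := Pz_eq_iff_multiset n h
  have hz : Function.Injective z ↔ (Finset.univ.val.map z).Nodup := by
    rw [Multiset.nodup_map_iff_inj_on Finset.univ.nodup]
    constructor
    · intro hi x _ y _ hxy; exact hi hxy
    · intro hi x y hxy; exact hi x (Finset.mem_univ x) y (Finset.mem_univ y) hxy
  have hw : Function.Injective w ↔ (Finset.univ.val.map w).Nodup := by
    rw [Multiset.nodup_map_iff_inj_on Finset.univ.nodup]
    constructor
    · intro hi x _ y _ hxy; exact hi hxy
    · intro hi x y hxy; exact hi x (Finset.mem_univ x) y (Finset.mem_univ y) hxy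
  rw [hz, hw, hm]

lemma range_eq_of_Pz_eq (n : ℕ) {z w : Fin n → ℂ} (h : Pz n z = Pz n w) :
    Set.range z = Set.range w := by
  have hm := Pz_eq_iff_multiset n h
  ext x
  constructor
  · rintro ⟨j, rfl⟩
    have : z j ∈ Finset.univ.val.map w := by
      rw [← hm]; exact Multiset.mem_map_of_mem _ (Finset.mem_univ j)
    rcases Multiset.mem_map.mp this with ⟨i, _, hi⟩
    exact ⟨i, hi⟩
  · rintro ⟨j, rfl⟩
    have : w j ∈ Finset.univ.val.map z := by
      rw [hm]; exact Multiset.mem_map_of_mem _ (Finset.mem_univ j)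
    rcases Multiset.mem_map.mp this with ⟨i, _, hi⟩
    exact ⟨i, hi⟩

/-- If two injective tuples have the same associated polynomial, they differ
by a permutation: `z = w ∘ σ`. -/
lemma exists_perm_of_Pz_eq (n : ℕ) {z w : Fin n → ℂ} (hz : Function.Injective z)
    (hw : Function.Injective w) (h : Pz n z = Pz n w) :
    ∃ σ : Equiv.Perm (Fin n), z = w ∘ σ := by
  have hr : Set.range z = Set.range w := range_eq_of_Pz_eq n h
  refine ⟨(Equiv.ofInjective z hz).trans ((Equiv.setCongr hr).trans
    (Equiv.ofInjective w hw).symm), ?_⟩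
  funext j
  show z j = w (((Equiv.ofInjective w hw).symm) (Equiv.setCongr hr ((Equiv.ofInjective z hz) j)))
  rw [Equiv.apply_ofInjective_symm hw]
  rfl

lemma isOpen_injective (n : ℕ) : IsOpen {z : Fin n → ℂ | Function.Injective z} := by
  rw [← isClosed_compl_iff]
  have : {z : Fin n → ℂ | Function.Injective z}ᶜ =
      ⋃ i, ⋃ j, ⋃ (_ : i ≠ j), {z : Fin n → ℂ | z i = z j} := by
    ext z
    simp only [Set.mem_compl_iff, Set.mem_setOf_eq, Set.mem_iUnion, Function.Injective]
    constructor
    · intro h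
      push_neg at h
      obtain ⟨i, j, hij, hne⟩ := h
      exact ⟨i, j, hne, hij⟩
    · rintro ⟨i, j, hne, hij⟩ h
      exact hne (h hij)
  rw [this]
  exact isClosed_iUnion_of_finite fun i => isClosed_iUnion_of_finite fun j =>
    isClosed_iUnion_of_finite fun _ => isClosed_eq (continuous_apply i) (continuous_apply j)

/-- `Pz` of an injective centered tuple has a nonzero low coefficient. -/
lemma exists_coeff_ne_zero (n : ℕ) (hn : 2 ≤ n) {w : Fin n → ℂ}
    (hw : Function.Injective w) (hsum : ∑ j, w j = 0) :
    (fun i : Fin (n - 1) => (Pz n w).coeff i) ≠ 0 := by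
  intro h0
  have hlow : ∀ k < n, (Pz n w).coeff k = 0 := by
    intro k hk
    rcases lt_or_ge k (n - 1) with hk1 | hk1
    · exact congrFun h0 ⟨k, hk1⟩
    · have hk2 : k = n - 1 := le_antisymm (by omega) hk1
      subst hk2
      have := prod_X_sub_C_coeff_card_pred (Finset.univ : Finset (Fin n)) w
        (by simp; omega)
      rw [Finset.card_univ, Fintype.card_fin] at this
      rw [Pz, this, hsum, neg_zero]
  have hXn : Pz n w = X ^ n := by
    refine monic_ext (Pz_monic n w) (monic_X_pow n) (Pz_natDegree n w) (natDegree_X_pow n) ?_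
    intro k hk
    rw [hlow k hk, coeff_X_pow, if_neg (Nat.ne_of_lt hk)]
  have hzero : ∀ j : Fin n, w j = 0 := by
    intro j
    have h1 : (Pz n w).eval (w j) = 0 := by
      rw [Pz_eval]
      exact Finset.prod_eq_zero (Finset.mem_univ j) (sub_self _)
    rw [hXn, eval_pow, eval_X] at h1
    exact pow_eq_zero_iff (by omega) |>.mp h1
  have h01 : (⟨0, by omega⟩ : Fin n) = ⟨1, by omega⟩ :=
    hw ((hzero _).trans (hzero _).symm)
  have := congrArg Fin.val h01
  simp at this


lemma Pz_ne_zero (n : ℕ) (z : Fin n → ℂ) : Pz n z ≠ 0 := (Pz_monic n z).ne_zero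

lemma isRoot_Pz (n : ℕ) (z : Fin n → ℂ) (j : Fin n) : (Pz n z).IsRoot (z j) := by
  rw [IsRoot.def, Pz_eval]
  exact Finset.prod_eq_zero (Finset.mem_univ j) (sub_self _)

lemma Phi_proper (n : ℕ) : IsProperMap (Phi n) := by
  rw [isProperMap_iff_isCompact_preimage]
  refine ⟨continuous_Phi n, fun K hK => ?_⟩
  obtain ⟨M0, hM0'⟩ := hK.isBounded.exists_norm_le
  set M := max M0 0 with hMdef
  have hM : ∀ a ∈ K, ‖a‖ ≤ M := fun a ha => le_trans (hM0' a ha) (le_max_left _ _)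
  have hM0 : 0 ≤ M := le_max_right _ _
  refine IsCompact.of_isClosed_subset (isCompact_closedBall (0 : Fin n → ℂ) (M + 1))
    (IsClosed.preimage (continuous_Phi n) hK.isClosed) ?_
  intro z hz
  rw [Metric.mem_closedBall, dist_zero_right]
  have hroot : ∀ j, ‖z j‖ ≤ M + 1 := by
    intro j
    have h1 : ‖z j‖₊ < cauchyBound (Pz n z) :=
      (isRoot_Pz n z j).norm_lt_cauchyBound (Pz_ne_zero n z)
    have hsup : ∀ i ∈ Finset.range (Pz n z).natDegree, ‖(Pz n z).coeff i‖₊ ≤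
        Real.toNNReal M := by
      intro i hi
      rw [Finset.mem_range, Pz_natDegree] at hi
      have hcoe : (Pz n z).coeff i = Phi n z ⟨i, hi⟩ := rfl
      rw [← NNReal.coe_le_coe, coe_nnnorm, hcoe, Real.coe_toNNReal _ hM0]
      exact le_trans (norm_le_pi_norm _ _) (hM _ hz)
    have h2' : cauchyBound (Pz n z) ≤ Real.toNNReal M + 1 := by
      rw [cauchyBound, (Pz_monic n z).leadingCoeff, nnnorm_one, div_one]
      exact add_le_add_left (Finset.sup_le hsup) 1
    have h2 : (cauchyBound (Pz n z) : ℝ) ≤ M + 1 := by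
      calc (cauchyBound (Pz n z) : ℝ) ≤ ((Real.toNNReal M + 1 : ℝ≥0) : ℝ) :=
            NNReal.coe_le_coe.mpr h2'
        _ = M + 1 := by rw [NNReal.coe_add, NNReal.coe_one, Real.coe_toNNReal _ hM0]
    calc ‖z j‖ = (‖z j‖₊ : ℝ) := (coe_nnnorm _).symm
      _ ≤ (cauchyBound (Pz n z) : ℝ) := NNReal.coe_le_coe.mpr h1.le
      _ ≤ M + 1 := h2
  exact pi_norm_le_iff_of_nonneg (by positivity) |>.mpr hroot

lemma Phi_isQuotientMap (n : ℕ) : IsQuotientMap (Phi n) :=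
  (Phi_proper n).isClosedMap.isQuotientMap (continuous_Phi n) (Phi_surjective n)

/-- A choice of root tuple for a given coefficient tuple. -/
def rootsOf (n : ℕ) (a : Fin n → ℂ) : Fin n → ℂ := (Phi_surjective n a).choose

lemma Phi_rootsOf (n : ℕ) (a : Fin n → ℂ) : Phi n (rootsOf n a) = a :=
  (Phi_surjective n a).choose_spec

lemma Pz_rootsOf_eq (n : ℕ) {z : Fin n → ℂ} : Pz n (rootsOf n (Phi n z)) = Pz n z := by
  rw [← Q_Phi n (rootsOf n (Phi n z)), Phi_rootsOf, Q_Phi]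

/-- The open set of coefficient tuples whose polynomial has distinct roots. -/
def S0 (n : ℕ) : Set (Fin n → ℂ) := Phi n '' {z | Function.Injective z}

lemma preimage_S0 (n : ℕ) : Phi n ⁻¹' S0 n = {z | Function.Injective z} := by
  ext z
  constructor
  · rintro ⟨w, hw, hPhi⟩
    have hPz : Pz n w = Pz n z := by rw [← Q_Phi n w, ← Q_Phi n z, hPhi]
    exact (injective_iff_of_Pz_eq n hPz).mp hw
  · intro hz
    exact ⟨z, hz, rfl⟩

lemma mem_S0_iff (n : ℕ) (a : Fin n → ℂ) :
    a ∈ S0 n ↔ Function.Injective (rootsOf n a) := by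
  constructor
  · intro ha
    have : rootsOf n a ∈ Phi n ⁻¹' S0 n := by
      rw [Set.mem_preimage, Phi_rootsOf]; exact ha
    rwa [preimage_S0] at this
  · intro h
    exact ⟨rootsOf n a, h, Phi_rootsOf n a⟩

lemma isOpen_S0 (n : ℕ) : IsOpen (S0 n) := by
  have hcover : (S0 n)ᶜ = Phi n '' {z | Function.Injective z}ᶜ := by
    apply Set.eq_of_subset_of_subset
    · intro a ha
      obtain ⟨z, hz⟩ := Phi_surjective n a
      refine ⟨z, ?_, hz⟩
      intro hinj
      exact ha ⟨z, hinj, hz⟩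
    · rintro _ ⟨z, hz, rfl⟩ ⟨w, hw, hPhi⟩
      have hPz : Pz n w = Pz n z := by rw [← Q_Phi n w, ← Q_Phi n z, hPhi]
      exact hz ((injective_iff_of_Pz_eq n hPz).mp hw)
  rw [← isClosed_compl_iff, hcover]
  exact (Phi_proper n).isClosedMap _ (isOpen_injective n).isClosed_compl

/-- Restriction of a quotient map to the preimage of an open set is a quotient map. -/
lemma isQuotientMap_restrict {X Y : Type*} [TopologicalSpace X] [TopologicalSpace Y]
    {q : X → Y} (hq : IsQuotientMap q) {V : Set Y} (hV : IsOpen V) :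
    IsQuotientMap fun x : q ⁻¹' V => (⟨q x.1, x.2⟩ : V) := by
  rw [isQuotientMap_iff, isCoinducing_iff, and_comm]
  constructor
  · rintro ⟨y, hy⟩
    obtain ⟨x, rfl⟩ := hq.surjective y
    exact ⟨⟨x, hy⟩, rfl⟩
  · intro s
    rw [iff_comm]
    constructor
    · intro hs
      exact (hs.preimage (Continuous.subtype_mk (hq.continuous.comp continuous_subtype_val) _))
    · intro hs
      obtain ⟨O, hO, hOeq⟩ := isOpen_induced_iff.mp hs
      have hkey : q ⁻¹' (Subtype.val '' s) = O ∩ q ⁻¹' V := by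
        ext x
        simp only [Set.mem_preimage, Set.mem_image, Set.mem_inter_iff]
        constructor
        · rintro ⟨y, hys, hyx⟩
          have hxV : q x ∈ V := hyx ▸ y.2
          have hmem : (⟨x, hxV⟩ : q ⁻¹' V) ∈
              (fun x : q ⁻¹' V => (⟨q x.1, x.2⟩ : V)) ⁻¹' s := by
            have : (⟨q x, hxV⟩ : V) = y := Subtype.ext hyx.symm
            simpa [Set.mem_preimage, this] using hys
          rw [← hOeq] at hmem
          exact ⟨hmem, hxV⟩
        · rintro ⟨hxO, hxV⟩
          have hmem : (⟨x, hxV⟩ : q ⁻¹' V) ∈ Subtype.val ⁻¹' O := hxO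
          rw [hOeq] at hmem
          exact ⟨⟨q x, hxV⟩, hmem, rfl⟩
      have hopen : IsOpen (Subtype.val '' s) := by
        rw [← hq.isOpen_preimage, hkey]
        exact hO.inter (hq.continuous.isOpen_preimage V hV)
      rw [isOpen_induced_iff]
      exact ⟨Subtype.val '' s, hopen, Set.preimage_image_eq s Subtype.val_injective⟩


/-- Centering a tuple at its barycenter. -/
def cent (n : ℕ) (f : Fin n → ℂ) : Fin n → ℂ := fun j => f j - (∑ k, f k) / n

lemma cent_sum (n : ℕ) (hn : n ≠ 0) (f : Fin n → ℂ) : ∑ j, cent n f j = 0 := by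
  have hcast : (n : ℂ) ≠ 0 := Nat.cast_ne_zero.mpr hn
  simp only [cent, Finset.sum_sub_distrib, Finset.sum_const, Finset.card_univ,
    Fintype.card_fin, nsmul_eq_mul]
  rw [mul_div_cancel₀ _ hcast, sub_self]

lemma cent_eq_self (n : ℕ) {f : Fin n → ℂ} (h : ∑ k, f k = 0) : cent n f = f := by
  funext j
  simp [cent, h]

lemma cent_injective (n : ℕ) {f : Fin n → ℂ} (hf : Function.Injective f) :
    Function.Injective (cent n f) := fun i j h => hf (by
  simpa [cent, sub_left_inj] using h)

lemma cent_comp_perm (n : ℕ) (f : Fin n → ℂ) (σ : Equiv.Perm (Fin n)) :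
    cent n (f ∘ σ) = cent n f ∘ σ := by
  funext j
  simp only [cent, Function.comp_apply]
  congr 2
  exact Equiv.sum_comp σ f

lemma cent_affine (n : ℕ) (hn : n ≠ 0) (a b : ℂ) (f : Fin n → ℂ) :
    cent n (fun j => b * f j + a) = fun j => b * cent n f j := by
  have hcast : (n : ℂ) ≠ 0 := Nat.cast_ne_zero.mpr hn
  funext j
  simp only [cent, Finset.sum_add_distrib, ← Finset.mul_sum, Finset.sum_const,
    Finset.card_univ, Fintype.card_fin, nsmul_eq_mul]
  field_simp
  ring

/-- The low coefficients of the centered polynomial of a configuration. -/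
def phi (n : ℕ) (f : Fin n → ℂ) : Fin (n - 1) → ℂ :=
  fun i => (Pz n (cent n f)).coeff i

lemma continuous_cent (n : ℕ) : Continuous (cent n) := by
  refine continuous_pi fun j => (continuous_apply j).sub ?_
  exact (continuous_finset_sum _ fun k _ => continuous_apply k).div_const _

lemma continuous_phi (n : ℕ) : Continuous (phi n) :=
  continuous_pi fun i =>
    (continuous_Pz_coeff n i (le_of_lt (lt_of_lt_of_le i.2 (Nat.sub_le n 1)))).comp
      (continuous_cent n)

lemma phi_ne_zero (n : ℕ) (hn : 2 ≤ n) {f : Fin n → ℂ} (hf : Function.Injective f) :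
    phi n f ≠ 0 :=
  exists_coeff_ne_zero n hn (cent_injective n hf) (cent_sum n (by omega) f)

lemma sum_eq_neg_coeff (n : ℕ) (hn : 1 ≤ n) (z : Fin n → ℂ) :
    (Pz n z).coeff (n - 1) = -∑ j, z j := by
  have h := prod_X_sub_C_coeff_card_pred (Finset.univ : Finset (Fin n)) z
    (by simp; omega)
  rw [Finset.card_univ, Fintype.card_fin] at h
  exact h

/-- Embedding of low-coefficient tuples into full coefficient tuples (top coefficient `0`). -/
def iota (n : ℕ) (v : Fin (n - 1) → ℂ) : Fin n → ℂ :=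
  fun i => if h : (i : ℕ) < n - 1 then v ⟨i, h⟩ else 0

lemma continuous_iota (n : ℕ) : Continuous (iota n) := by
  refine continuous_pi fun i => ?_
  by_cases h : (i : ℕ) < n - 1
  · simp only [iota, dif_pos h]
    exact continuous_apply _
  · simp only [iota, dif_neg h]
    exact continuous_const

lemma iota_phiRaw (n : ℕ) (hn : 1 ≤ n) (z : Fin n → ℂ) (hsum : ∑ j, z j = 0) :
    iota n (fun i : Fin (n - 1) => (Pz n z).coeff i) = Phi n z := by
  funext i
  by_cases h : (i : ℕ) < n - 1
  · simp only [iota, dif_pos h]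
    rfl
  · have hi : (i : ℕ) = n - 1 := by have := i.2; omega
    simp only [iota, dif_neg h]
    show (0 : ℂ) = (Pz n z).coeff i
    rw [hi, sum_eq_neg_coeff n hn z, hsum, neg_zero]

lemma wpRel_equivalence (n : ℕ) : Equivalence (wpRel n) := by
  constructor
  · intro v
    exact ⟨1, one_ne_zero, fun i => by simp⟩
  · rintro v w ⟨t, ht, hvw⟩
    refine ⟨t⁻¹, inv_ne_zero ht, fun i => ?_⟩
    rw [hvw i, inv_pow]
    field_simp
  · rintro u v w ⟨t, ht, huv⟩ ⟨s, hs, hvw⟩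
    refine ⟨s * t, mul_ne_zero hs ht, fun i => ?_⟩
    rw [hvw i, huv i, mul_pow]
    ring

/-- Promote an injective tuple to an ordered configuration. -/
def toOC (n : ℕ) (z : Fin n → ℂ) (hz : Function.Injective z) : OrdConfig n Set.univ :=
  ⟨z, hz, fun _ => Set.mem_univ _⟩

/-- The "roots" map from admissible coefficient tuples to the configuration orbit space. -/
def psi (n : ℕ) : ↥(S0 n) → ConfigModAff n := fun a =>
  Quot.mk _ (Quot.mk _ (toOC n (rootsOf n a.1) ((mem_S0_iff n a.1).mp a.2)))

lemma continuous_psi (n : ℕ) : Continuous (psi n) := by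
  have hq := isQuotientMap_restrict (Phi_isQuotientMap n) (isOpen_S0 n)
  rw [hq.continuous_iff]
  have heq : (psi n ∘ fun z : Phi n ⁻¹' S0 n => (⟨Phi n z.1, z.2⟩ : ↥(S0 n)))
      = fun z : Phi n ⁻¹' S0 n =>
        Quot.mk _ (Quot.mk _ (toOC n z.1
          ((Set.ext_iff.mp (preimage_S0 n) z.1).mp z.2))) := by
    funext z
    have hzinj : Function.Injective z.1 :=
      (Set.ext_iff.mp (preimage_S0 n) z.1).mp z.2
    have hrinj : Function.Injective (rootsOf n (Phi n z.1)) :=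
      (injective_iff_of_Pz_eq n (Pz_rootsOf_eq n)).mpr hzinj
    show Quot.mk _ (Quot.mk _ (toOC n (rootsOf n (Phi n z.1)) _)) = _
    obtain ⟨σ, hσ⟩ := exists_perm_of_Pz_eq n hrinj hzinj (Pz_rootsOf_eq n)
    refine congrArg _ (Quot.sound ⟨σ.symm, ?_⟩)
    show z.1 = rootsOf n (Phi n z.1) ∘ ⇑σ.symm
    rw [hσ]
    funext j
    simp
  rw [heq]
  exact continuous_quot_mk.comp (continuous_quot_mk.comp
    (Continuous.subtype_mk continuous_subtype_val _))

/-- The coefficient point of a configuration, as an element of `ℂ^{n-1}∖{0}`. -/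
def toV (n : ℕ) (hn : 2 ≤ n) (f : OrdConfig n Set.univ) : {v : Fin (n - 1) → ℂ // v ≠ 0} :=
  ⟨phi n f.1, phi_ne_zero n hn f.2.1⟩

lemma toV_perm (n : ℕ) (hn : 2 ≤ n) {f g : OrdConfig n Set.univ}
    (h : permRel n Set.univ f g) : toV n hn f = toV n hn g := by
  obtain ⟨σ, hσ⟩ := h
  refine Subtype.ext ?_
  show phi n f.1 = phi n g.1
  rw [hσ]
  funext i
  show (Pz n (cent n f.1)).coeff i = (Pz n (cent n (f.1 ∘ σ))).coeff i
  rw [cent_comp_perm, Pz_comp_perm]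

/-- The embedding map on the level of unordered configurations. -/
def e1 (n : ℕ) (hn : 2 ≤ n) : UConfig n Set.univ → WProj n :=
  Quot.lift (fun f => Quot.mk _ (toV n hn f)) fun f g h => congrArg _ (toV_perm n hn h)

lemma e1_aff (n : ℕ) (hn : 2 ≤ n) {c d : UConfig n Set.univ} (h : affRel n c d) :
    e1 n hn c = e1 n hn d := by
  obtain ⟨a, b, hb, f, g, hfc, hgd, hrel⟩ := h
  rw [← hfc, ← hgd]
  show Quot.mk _ (toV n hn f) = Quot.mk _ (toV n hn g)
  refine Quot.sound ⟨b, hb, fun i => ?_⟩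
  show phi n g.1 i = b ^ (n - i.1) * phi n f.1 i
  have hg : g.1 = fun j => b * f.1 j + a := funext hrel
  show (Pz n (cent n g.1)).coeff i.1 = b ^ (n - i.1) * (Pz n (cent n f.1)).coeff i.1
  rw [hg, cent_affine n (by omega) a b f.1,
    Pz_smul_coeff n (cent n f.1) b (le_of_lt (lt_of_lt_of_le i.2 (Nat.sub_le n 1)))]

/-- The embedding map `C_n(ℂ)/(ℂ⋊ℂ*) → ℙ(n,…,2)`. -/
def eMap (n : ℕ) (hn : 2 ≤ n) : ConfigModAff n → WProj n :=
  Quot.lift (e1 n hn) fun _ _ h => e1_aff n hn h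

lemma continuous_eMap (n : ℕ) (hn : 2 ≤ n) : Continuous (eMap n hn) := by
  refine continuous_quot_lift _ (continuous_quot_lift _ ?_)
  exact continuous_quot_mk.comp
    (Continuous.subtype_mk ((continuous_phi n).comp continuous_subtype_val) _)

lemma eMap_injective (n : ℕ) (hn : 2 ≤ n) : Function.Injective (eMap n hn) := by
  intro c c' h
  obtain ⟨u, rfl⟩ := Quot.exists_rep c
  obtain ⟨u', rfl⟩ := Quot.exists_rep c'
  obtain ⟨f, rfl⟩ := Quot.exists_rep u
  obtain ⟨f', rfl⟩ := Quot.exists_rep u'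
  have hwp : wpRel n (toV n hn f) (toV n hn f') :=
    ((wpRel_equivalence n).eqvGen_iff).mp (Quot.eqvGen_exact h)
  obtain ⟨t, ht, hsc⟩ := hwp
  have hn0 : (1 : ℕ) ≤ n := by omega
  have hPz : Pz n (cent n f'.1) = Pz n (fun j => t * cent n f.1 j) := by
    refine monic_ext (Pz_monic n _) (Pz_monic n _) (Pz_natDegree n _) (Pz_natDegree n _)
      fun k hk => ?_
    rcases lt_or_ge k (n - 1) with hk1 | hk1
    · have := hsc ⟨k, hk1⟩
      show (Pz n (cent n f'.1)).coeff k = _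
      rw [Pz_smul_coeff n _ t hk.le]
      exact this
    · have hk2 : k = n - 1 := by omega
      subst hk2
      rw [sum_eq_neg_coeff n hn0, sum_eq_neg_coeff n hn0,
        cent_sum n (by omega), ← Finset.mul_sum, cent_sum n (by omega)]
      simp
  obtain ⟨σ, hσ⟩ := exists_perm_of_Pz_eq n (cent_injective n f'.2.1)
    (fun i j hij => cent_injective n f.2.1 (mul_left_cancel₀ ht hij)) hPz
  refine Quot.sound ⟨(∑ k, f'.1 k) / n - t * ((∑ k, f.1 k) / n), t, ht,
    ⟨f.1 ∘ σ, f.2.1.comp σ.injective, fun _ => Set.mem_univ _⟩, f',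
    Quot.sound ⟨σ.symm, by funext j; simp⟩, rfl, fun j => ?_⟩
  have hj := congrFun hσ j
  simp only [cent, Function.comp_apply] at hj ⊢
  linear_combination hj

lemma phi_eq_of_iota (n : ℕ) (hn : 2 ≤ n) {z : Fin n → ℂ} {v : Fin (n - 1) → ℂ}
    (hΦ : Phi n z = iota n v) (hsum : ∑ j, z j = 0) : phi n z = v := by
  funext i
  have h1 : phi n z i = (Pz n z).coeff i.1 := by
    show (Pz n (cent n z)).coeff i.1 = _
    rw [cent_eq_self n hsum]
  have h2 : (Pz n z).coeff i.1 = Phi n z ⟨i.1, lt_of_lt_of_le i.2 (Nat.sub_le n 1)⟩ := rfl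
  rw [h1, h2, hΦ]
  show dite _ _ _ = _
  rw [dif_pos i.2]

lemma sum_rootsOf_iota (n : ℕ) (hn : 2 ≤ n) (v : Fin (n - 1) → ℂ) :
    ∑ j, rootsOf n (iota n v) j = 0 := by
  have hlt : n - 1 < n := by omega
  have h1 : (Pz n (rootsOf n (iota n v))).coeff (n - 1) = -∑ j, rootsOf n (iota n v) j :=
    sum_eq_neg_coeff n (by omega) _
  have h2 : (Pz n (rootsOf n (iota n v))).coeff (n - 1) = Phi n (rootsOf n (iota n v)) ⟨n - 1, hlt⟩ :=
    rfl
  rw [h2, Phi_rootsOf] at h1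
  have h3 : iota n v ⟨n - 1, hlt⟩ = 0 := dif_neg (lt_irrefl _)
  rw [h3] at h1
  exact neg_eq_zero.mp h1.symm

lemma eMap_psi (n : ℕ) (hn : 2 ≤ n) (v : {v : Fin (n - 1) → ℂ // v ≠ 0})
    (hv : iota n v.1 ∈ S0 n) :
    eMap n hn (psi n ⟨iota n v.1, hv⟩) = Quot.mk _ v := by
  show Quot.mk _ (toV n hn (toOC n (rootsOf n (iota n v.1)) _)) = Quot.mk _ v
  refine congrArg _ (Subtype.ext ?_)
  exact phi_eq_of_iota n hn (Phi_rootsOf n _) (sum_rootsOf_iota n hn v.1)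

lemma iota_mem_S0_of_mem_range (n : ℕ) (hn : 2 ≤ n) (v : {v : Fin (n - 1) → ℂ // v ≠ 0})
    (h : Quot.mk (wpRel n) v ∈ Set.range (eMap n hn)) : iota n v.1 ∈ S0 n := by
  obtain ⟨c, hc⟩ := h
  obtain ⟨u, rfl⟩ := Quot.exists_rep c
  obtain ⟨f, rfl⟩ := Quot.exists_rep u
  have hwp : wpRel n (toV n hn f) v :=
    ((wpRel_equivalence n).eqvGen_iff).mp (Quot.eqvGen_exact hc)
  obtain ⟨t, ht, hsc⟩ := hwp
  have hΦ : Phi n (fun j => t * cent n f.1 j) = iota n v.1 := by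
    funext i
    by_cases hi : (i : ℕ) < n - 1
    · show (Pz n (fun j => t * cent n f.1 j)).coeff i.1 = dite _ _ _
      rw [dif_pos hi, Pz_smul_coeff n _ t i.2.le]
      exact (hsc ⟨i.1, hi⟩).symm
    · have hieq : (i : ℕ) = n - 1 := by have := i.2; omega
      show (Pz n (fun j => t * cent n f.1 j)).coeff i.1 = dite _ _ _
      rw [dif_neg hi, hieq, sum_eq_neg_coeff n (by omega), ← Finset.mul_sum,
        cent_sum n (by omega), mul_zero, neg_zero]
  exact ⟨fun j => t * cent n f.1 j,
    fun i j hij => cent_injective n f.2.1 (mul_left_cancel₀ ht hij), hΦ⟩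

lemma dense_good (n : ℕ) (hn : 2 ≤ n) :
    Dense {v : {v : Fin (n - 1) → ℂ // v ≠ 0} | iota n v.1 ∈ S0 n} := by
  intro v
  rw [Metric.mem_closure_iff]
  intro ε hε
  set z := rootsOf n (iota n v.1) with hzdef
  have hΦz : Phi n z = iota n v.1 := Phi_rootsOf n _
  have hsum : ∑ j, z j = 0 := sum_rootsOf_iota n hn v.1
  set d : Fin n → ℂ := fun j => (j.1 : ℂ) with hddef
  have hdinj : ∀ i j : Fin n, i ≠ j → d i ≠ d j := by
    intro i j hij h
    exact hij (Fin.ext (Nat.cast_injective h))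
  set G : ℂ → (Fin (n - 1) → ℂ) := fun t => phi n (fun j => z j + t * d j) with hGdef
  have hGcont : Continuous G :=
    (continuous_phi n).comp (continuous_pi fun j =>
      continuous_const.add (continuous_id.mul continuous_const))
  have hG0 : G 0 = v.1 := by
    have hz0 : (fun j => z j + 0 * d j) = z := by funext j; ring
    rw [hGdef]
    show phi n (fun j => z j + 0 * d j) = v.1
    rw [hz0]
    exact phi_eq_of_iota n hn hΦz hsum
  obtain ⟨δ, hδ, hcont⟩ := Metric.continuous_iff.mp hGcont 0 ε hε
  -- the finite set of bad parameters
  set B : Set ℂ := ⋃ i, ⋃ j, {t : ℂ | z i + t * d i = z j + t * d j ∧ i ≠ j} with hBdef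
  have hBfin : B.Finite := by
    refine Set.finite_iUnion fun i => Set.finite_iUnion fun j => ?_
    refine Set.Subsingleton.finite ?_
    intro t₁ h₁ t₂ h₂
    have hd : d i - d j ≠ 0 := sub_ne_zero.mpr (hdinj i j h₁.2)
    have : t₁ * (d i - d j) = t₂ * (d i - d j) := by
      linear_combination h₁.1 - h₂.1
    exact mul_right_cancel₀ hd this
  have hT : Set.Infinite ((fun r : ℝ => (r : ℂ)) '' Set.Ioo 0 δ) :=
    (Set.Ioo_infinite hδ).image (Complex.ofReal_injective.injOn)
  obtain ⟨t, htT, htB⟩ := (hT.diff hBfin).nonempty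
  obtain ⟨r, hr, rfl⟩ := htT
  have hinj : Function.Injective (fun j => z j + (r : ℂ) * d j) := by
    intro i j hij
    by_contra hne
    exact htB (Set.mem_iUnion.mpr ⟨i, Set.mem_iUnion.mpr ⟨j, ⟨hij, hne⟩⟩⟩)
  have hGne : G (r : ℂ) ≠ 0 := phi_ne_zero n hn hinj
  have hmem : iota n (G (r : ℂ)) ∈ S0 n := by
    have hcent : ∑ j, cent n (fun j => z j + (r : ℂ) * d j) j = 0 :=
      cent_sum n (by omega) _
    have : iota n (G (r : ℂ)) = Phi n (cent n (fun j => z j + (r : ℂ) * d j)) :=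
      iota_phiRaw n (by omega) _ hcent
    rw [this]
    exact ⟨_, cent_injective n hinj, rfl⟩
  refine ⟨⟨G (r : ℂ), hGne⟩, hmem, ?_⟩
  rw [Subtype.dist_eq]
  show dist v.1 (G (r : ℂ)) < ε
  rw [← hG0, dist_comm]
  apply hcont
  rw [Complex.dist_eq, sub_zero, Complex.norm_real, Real.norm_eq_abs, abs_of_pos hr.1]
  exact hr.2

end ConfigWP

open ConfigWP

/-- There is a topological embedding of `C_n(ℂ)/(ℂ⋊ℂ*)` into `ℙ(n, n−1, …, 2)` with open
dense image, sending the class of `{z_1,…,z_n}` to `[a_0 : … : a_{n−2}]` where the `a_i`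
are the coefficients of the monic polynomial `∏_j (z − z_j + B(z))`, `B(z)` being the
barycenter. -/
theorem configModAff_embeds_wproj (n : ℕ) (hn : 2 ≤ n) :
    ∃ e : ConfigModAff n → WProj n,
      IsEmbedding e ∧ IsOpen (Set.range e) ∧ Dense (Set.range e) ∧
      ∀ (f : OrdConfig n Set.univ) (v : {v : Fin (n - 1) → ℂ // v ≠ 0}),
        (∀ i : Fin (n - 1),
          v.1 i = (∏ j, (X - C (f.1 j) + C ((∑ k, f.1 k) / (n : ℂ)))).coeff i.1) →
        e (Quot.mk _ (Quot.mk _ f)) = Quot.mk _ v := by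
  classical
  have hrange_pre : Quot.mk (wpRel n) ⁻¹' Set.range (eMap n hn)
      = {v : {v : Fin (n - 1) → ℂ // v ≠ 0} | iota n v.1 ∈ S0 n} := by
    ext v
    constructor
    · exact fun h => iota_mem_S0_of_mem_range n hn v h
    · exact fun h => ⟨psi n ⟨iota n v.1, h⟩, eMap_psi n hn v h⟩
  have hTopen : IsOpen {v : {v : Fin (n - 1) → ℂ // v ≠ 0} | iota n v.1 ∈ S0 n} :=
    ((continuous_iota n).comp continuous_subtype_val).isOpen_preimage _ (isOpen_S0 n)
  have hopenrange : IsOpen (Set.range (eMap n hn)) := by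
    refine isQuotientMap_quot_mk.isOpen_preimage.mp ?_
    rw [hrange_pre]
    exact hTopen
  have hopenmap : IsOpenMap (eMap n hn) := by
    intro U hU
    rw [← isQuotientMap_quot_mk.isOpen_preimage]
    have hset : Quot.mk (wpRel n) ⁻¹' (eMap n hn '' U)
        = Subtype.val '' ((fun w : ↥{v : {v : Fin (n - 1) → ℂ // v ≠ 0} | iota n v.1 ∈ S0 n} =>
            psi n ⟨iota n w.1.1, w.2⟩) ⁻¹' U) := by
      ext v
      simp only [Set.mem_preimage, Set.mem_image]
      constructor
      · rintro ⟨c, hcU, hc⟩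
        have hv : iota n v.1 ∈ S0 n := iota_mem_S0_of_mem_range n hn v ⟨c, hc⟩
        have he := eMap_psi n hn v hv
        have hceq : c = psi n ⟨iota n v.1, hv⟩ := eMap_injective n hn (hc.trans he.symm)
        exact ⟨⟨v, hv⟩, by exact hceq ▸ hcU, rfl⟩
      · rintro ⟨⟨w, hw⟩, hwU, rfl⟩
        exact ⟨psi n ⟨iota n w.1, hw⟩, hwU, eMap_psi n hn w hw⟩
    rw [hset]
    refine hTopen.isOpenMap_subtype_val _ ?_
    refine (Continuous.isOpen_preimage ((continuous_psi n).comp ?_) _ hU)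
    exact Continuous.subtype_mk (((continuous_iota n).comp continuous_subtype_val).comp
      continuous_subtype_val) _
  have hoe := IsOpenEmbedding.of_continuous_injective_isOpenMap (continuous_eMap n hn)
    (eMap_injective n hn) hopenmap
  have hdense : Dense (Set.range (eMap n hn)) := by
    intro x
    obtain ⟨v, rfl⟩ := Quot.exists_rep x
    have h1 : v ∈ closure {v : {v : Fin (n - 1) → ℂ // v ≠ 0} | iota n v.1 ∈ S0 n} :=
      dense_good n hn v
    have h2 : Quot.mk (wpRel n) v ∈
        Quot.mk (wpRel n) '' closure {v : {v : Fin (n - 1) → ℂ // v ≠ 0} | iota n v.1 ∈ S0 n} :=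
      ⟨v, h1, rfl⟩
    have h3 := (image_closure_subset_closure_image continuous_quot_mk) h2
    refine closure_mono ?_ h3
    rintro _ ⟨w, hw, rfl⟩
    exact ⟨psi n ⟨iota n w.1, hw⟩, eMap_psi n hn w hw⟩
  refine ⟨eMap n hn, hoe.toIsEmbedding, hopenrange, hdense, ?_⟩
  intro f v hv
  have hpoly : (∏ j, (X - C (f.1 j) + C ((∑ k, f.1 k) / (n : ℂ)))) = Pz n (cent n f.1) := by
    rw [Pz]
    refine Finset.prod_congr rfl fun j _ => ?_
    show X - C (f.1 j) + C ((∑ k, f.1 k) / (n : ℂ)) = X - C (f.1 j - (∑ k, f.1 k) / (n : ℂ))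
    rw [map_sub]
    ring
  have hv1 : v.1 = phi n f.1 := by
    funext i
    rw [hv i, hpoly]
    rfl
  have hveq : v = toV n hn f := Subtype.ext hv1
  rw [hveq]
  rfl
end
end

section
/- For every n ≥ 1, the orbit space C_n(ℂ)/S¹ is homotopy equivalent to the orbit space C_n(ℂ)/(ℂ⋊ℂ*). In the paper's notation, M_{0,n+1}/Σ_n is homotopy equivalent to C_n(ℂ)/S¹. -/
open Complex Topology

/-- The rotation relation on unordered configurations: `d` is obtained from `c` by
multiplying every point by the same unit complex number `u`. -/
def circleRel (n : ℕ) (c d : UConfig n Set.univ) : Prop :=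
  ∃ u : ℂ, ‖u‖ = 1 ∧ ∃ f g : OrdConfig n Set.univ,
    Quot.mk _ f = c ∧ Quot.mk _ g = d ∧ ∀ i, g.1 i = u * f.1 i

/-- `C_n(ℂ)/S¹`, the orbit space with the quotient topology. -/
abbrev ConfigModCircle (n : ℕ) : Type := Quot (circleRel n)

namespace CfgAux

variable (n : ℕ)

abbrev T := OrdConfig n Set.univ

noncomputable def mu (f : T n) : ℂ := (∑ i, f.1 i) / (n : ℂ)

noncomputable def rr (f : T n) : ℝ := Real.sqrt (∑ i, Complex.normSq (f.1 i - mu n f))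

noncomputable def ri (f : T n) : ℝ := (rr n f)⁻¹

variable {n}

lemma rr_nonneg (f : T n) : 0 ≤ rr n f := Real.sqrt_nonneg _

lemma ri_nonneg (f : T n) : 0 ≤ ri n f := inv_nonneg.mpr (rr_nonneg f)

lemma eq_mu_of_rr_eq_zero {f : T n} (h : rr n f = 0) : ∀ i, f.1 i = mu n f := by
  intro i
  have h0 : ∑ j, Complex.normSq (f.1 j - mu n f) = 0 := by
    have hle : ∑ j, Complex.normSq (f.1 j - mu n f) ≤ 0 := Real.sqrt_eq_zero'.mp h
    have hge : 0 ≤ ∑ j, Complex.normSq (f.1 j - mu n f) :=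
      Finset.sum_nonneg fun j _ => Complex.normSq_nonneg _
    linarith
  have h1 := (Finset.sum_eq_zero_iff_of_nonneg
    (fun j _ => Complex.normSq_nonneg (f.1 j - mu n f))).mp h0 i (Finset.mem_univ i)
  exact sub_eq_zero.mp (Complex.normSq_eq_zero.mp h1)

/-- Invariance of the centroid under permutations. -/
lemma mu_perm {f g : T n} (σ : Equiv.Perm (Fin n)) (h : g.1 = f.1 ∘ σ) :
    mu n g = mu n f := by
  unfold mu
  rw [h]
  congr 1
  exact Equiv.sum_comp σ f.1

lemma rr_perm {f g : T n} (σ : Equiv.Perm (Fin n)) (h : g.1 = f.1 ∘ σ) :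
    rr n g = rr n f := by
  unfold rr
  rw [mu_perm σ h, h]
  congr 1
  exact Equiv.sum_comp σ (fun j => Complex.normSq (f.1 j - mu n f))

variable (hn : 1 ≤ n)
include hn

lemma ncast_ne : (n : ℂ) ≠ 0 := Nat.cast_ne_zero.mpr (by omega)

/-- Centroid of an affine transform. -/
lemma mu_affine {f g : T n} (b a : ℂ) (h : ∀ i, g.1 i = b * f.1 i + a) :
    mu n g = b * mu n f + a := by
  unfold mu
  have : ∑ i, g.1 i = b * ∑ i, f.1 i + (n : ℂ) * a := by
    rw [Finset.sum_congr rfl fun i _ => h i, Finset.sum_add_distrib, Finset.mul_sum]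
    simp [Finset.card_univ, mul_comm]
  rw [this]
  field_simp [ncast_ne hn]

lemma sub_mu_affine {f g : T n} (b a : ℂ) (h : ∀ i, g.1 i = b * f.1 i + a) (i : Fin n) :
    g.1 i - mu n g = b * (f.1 i - mu n f) := by
  rw [h i, mu_affine hn b a h]; ring

lemma rr_affine {f g : T n} (b a : ℂ) (h : ∀ i, g.1 i = b * f.1 i + a) :
    rr n g = ‖b‖ * rr n f := by
  unfold rr
  have : ∀ i, Complex.normSq (g.1 i - mu n g)
      = Complex.normSq b * Complex.normSq (f.1 i - mu n f) := by
    intro i; rw [sub_mu_affine hn b a h i, Complex.normSq_mul]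
  rw [Finset.sum_congr rfl fun i _ => this i, ← Finset.mul_sum,
    Real.sqrt_mul (Complex.normSq_nonneg b), ← Complex.norm_def]

lemma ri_affine {f g : T n} (b a : ℂ) (h : ∀ i, g.1 i = b * f.1 i + a) :
    ri n g = ‖b‖⁻¹ * ri n f := by
  unfold ri
  rw [rr_affine hn b a h, mul_inv]

omit hn

/-- Injectivity of affine images. -/
lemma inj_affine (f : T n) (b a : ℂ) (hb : b ≠ 0 ∨ rr n f = 0) :
    Function.Injective (fun i => b * f.1 i + a) := by
  intro i j hij
  simp only at hij
  rcases hb with hb | hb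
  · exact f.2.1 (mul_left_cancel₀ hb (by linear_combination hij))
  · have hi := eq_mu_of_rr_eq_zero hb i
    have hj := eq_mu_of_rr_eq_zero hb j
    exact f.2.1 (hi.trans hj.symm)

/-- The normalized configuration. -/
noncomputable def Nf (f : T n) : T n :=
  ⟨fun i => (ri n f : ℂ) * f.1 i + (-(mu n f) * (ri n f : ℂ)),
    by
      apply inj_affine f
      rcases eq_or_ne (rr n f) 0 with h | h
      · exact Or.inr h
      · exact Or.inl (by
          simp only [ne_eq, Complex.ofReal_eq_zero, ri]
          exact inv_ne_zero h),
    fun _ => trivial⟩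

/-- The straight-line homotopy path at time `t ∈ [0,1]`. -/
noncomputable def pth (t : ℝ) (ht : t ∈ Set.Icc (0:ℝ) 1) (f : T n) : T n :=
  ⟨fun i => (((1 - t) + t * ri n f : ℝ) : ℂ) * f.1 i
      + (-(((t * ri n f : ℝ) : ℂ)) * mu n f),
    by
      apply inj_affine f
      rcases eq_or_ne (rr n f) 0 with h | h
      · exact Or.inr h
      · refine Or.inl ?_
        have hri : 0 < ri n f := inv_pos.mpr (lt_of_le_of_ne (rr_nonneg f) (Ne.symm h))
        have h1 : 0 ≤ 1 - t := by linarith [ht.2]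
        have h2 : 0 ≤ t * ri n f := mul_nonneg ht.1 hri.le
        have hpos : 0 < (1 - t) + t * ri n f := by
          rcases eq_or_lt_of_le h1 with h1' | h1'
          · have ht1 : t = 1 := by linarith
            rw [ht1]; simpa using hri
          · linarith
        exact Complex.ofReal_ne_zero.mpr hpos.ne',
    fun _ => trivial⟩

lemma ri_perm {f g : T n} (σ : Equiv.Perm (Fin n)) (h : g.1 = f.1 ∘ σ) :
    ri n g = ri n f := by
  unfold ri; rw [rr_perm σ h]

variable (n)

def q1 : T n → UConfig n Set.univ := Quot.mk _

def qc : UConfig n Set.univ → ConfigModCircle n := Quot.mk _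

def qa : UConfig n Set.univ → ConfigModAff n := Quot.mk _

noncomputable def q : T n → ConfigModCircle n := fun f => qc n (q1 n f)

variable {n}

/-- Under a permutation, `Nf` transforms by the same permutation. -/
lemma q1_Nf_perm {f g : T n} (σ : Equiv.Perm (Fin n)) (h : g.1 = f.1 ∘ σ) :
    q1 n (Nf g) = q1 n (Nf f) := by
  refine (Quot.sound ⟨σ, ?_⟩).symm
  funext i
  simp only [Nf, Function.comp_apply]
  rw [mu_perm σ h, ri_perm σ h, h]
  rfl

/-- Under a permutation, `pth` transforms by the same permutation. -/
lemma q1_pth_perm (t : ℝ) (ht : t ∈ Set.Icc (0:ℝ) 1) {f g : T n} (σ : Equiv.Perm (Fin n))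
    (h : g.1 = f.1 ∘ σ) : q1 n (pth t ht g) = q1 n (pth t ht f) := by
  refine (Quot.sound ⟨σ, ?_⟩).symm
  funext i
  simp only [pth, Function.comp_apply]
  rw [mu_perm σ h, ri_perm σ h, h]
  rfl

include hn in
/-- Equivariance of the normalization under affine transformations. -/
lemma Nf_aff {f g : T n} (b a : ℂ) (hb : b ≠ 0) (h : ∀ i, g.1 i = b * f.1 i + a) :
    ∀ i, (Nf g).1 i = (b * ((‖b‖ : ℝ) : ℂ)⁻¹) * (Nf f).1 i := by
  intro i
  have e1 : (Nf g).1 i = (g.1 i - mu n g) * ((ri n g : ℝ) : ℂ) := by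
    simp only [Nf]; ring
  have e2 : (Nf f).1 i = (f.1 i - mu n f) * ((ri n f : ℝ) : ℂ) := by
    simp only [Nf]; ring
  rw [e1, e2, sub_mu_affine hn b a h i, ri_affine hn b a h]
  push_cast
  ring

include hn in
/-- Equivariance of the path under rotations. -/
lemma pth_circle (t : ℝ) (ht : t ∈ Set.Icc (0:ℝ) 1) {f g : T n} (u : ℂ)
    (hu : ‖u‖ = 1) (h : ∀ i, g.1 i = u * f.1 i) :
    ∀ i, (pth t ht g).1 i = u * (pth t ht f).1 i := by
  intro i
  have h' : ∀ i, g.1 i = u * f.1 i + 0 := by simpa using h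
  simp only [pth]
  rw [h i, mu_affine hn u 0 h', ri_affine hn u 0 h', hu]
  push_cast
  ring

/-- `Nf f` is affinely related to `f`. -/
lemma affRel_Nf (f : T n) : affRel n (q1 n f) (q1 n (Nf f)) := by
  rcases eq_or_ne (rr n f) 0 with h0 | h0
  · refine ⟨-(mu n f), 1, one_ne_zero, f, Nf f, rfl, rfl, fun i => ?_⟩
    simp only [Nf, ri, h0, inv_zero, Complex.ofReal_zero]
    rw [eq_mu_of_rr_eq_zero h0 i]
    ring
  · refine ⟨-(mu n f) * ((ri n f : ℝ) : ℂ), ((ri n f : ℝ) : ℂ),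
      Complex.ofReal_ne_zero.mpr (inv_ne_zero h0), f, Nf f, rfl, rfl, fun i => rfl⟩

/-- endpoints of the path -/
lemma pth_zero (ht : (0:ℝ) ∈ Set.Icc (0:ℝ) 1) (f : T n) : pth 0 ht f = f := by
  apply Subtype.ext; funext i
  simp only [pth]
  push_cast
  ring

lemma pth_one (ht : (1:ℝ) ∈ Set.Icc (0:ℝ) 1) (f : T n) : pth 1 ht f = Nf f := by
  apply Subtype.ext; funext i
  simp only [pth, Nf]
  push_cast
  ring

/-! ### Continuity -/

lemma cont_mu : Continuous (mu n) :=
  (continuous_finset_sum _ fun i _ =>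
    (continuous_apply i).comp continuous_subtype_val).div_const _

lemma cont_rr : Continuous (rr n) :=
  Real.continuous_sqrt.comp <| continuous_finset_sum _ fun i _ =>
    Complex.continuous_normSq.comp
      (((continuous_apply i).comp continuous_subtype_val).sub cont_mu)

lemma rr_eq_zero_of_le_one (h : n ≤ 1) (f : T n) : rr n f = 0 := by
  interval_cases n
  · simp [rr]
  · simp [rr, mu]

lemma rr_ne_zero_of_two_le (h : 2 ≤ n) (f : T n) : rr n f ≠ 0 := by
  intro h0
  have h1 := eq_mu_of_rr_eq_zero h0 ⟨0, by omega⟩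
  have h2 := eq_mu_of_rr_eq_zero h0 ⟨1, by omega⟩
  have := f.2.1 (h1.trans h2.symm)
  simp [Fin.mk.injEq] at this

lemma cont_ri : Continuous (ri n) := by
  rcases le_or_gt n 1 with h | h
  · have : (ri n : T n → ℝ) = fun _ => 0 :=
      funext fun f => by simp [ri, rr_eq_zero_of_le_one h f]
    rw [this]; exact continuous_const
  · exact cont_rr.inv₀ fun f => rr_ne_zero_of_two_le h f

lemma cont_Nf : Continuous (Nf : T n → T n) := by
  refine Continuous.subtype_mk ?_ _
  refine continuous_pi fun i => ?_
  exact ((Complex.continuous_ofReal.comp cont_ri).mul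
      ((continuous_apply i).comp continuous_subtype_val)).add
    ((cont_mu.neg).mul (Complex.continuous_ofReal.comp cont_ri))

lemma cont_pth : Continuous (fun p : unitInterval × T n => pth p.1.1 p.1.2 p.2) := by
  refine Continuous.subtype_mk ?_ _
  refine continuous_pi fun i => ?_
  have ht : Continuous (fun p : unitInterval × T n => (p.1 : ℝ)) :=
    continuous_subtype_val.comp continuous_fst
  have hri : Continuous (fun p : unitInterval × T n => ri n p.2) :=
    cont_ri.comp continuous_snd
  have hmu : Continuous (fun p : unitInterval × T n => mu n p.2) :=
    cont_mu.comp continuous_snd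
  have hev : Continuous (fun p : unitInterval × T n => p.2.1 i) :=
    (continuous_apply i).comp (continuous_subtype_val.comp continuous_snd)
  exact ((Complex.continuous_ofReal.comp
      ((continuous_const.sub ht).add (ht.mul hri))).mul hev).add
    (((Complex.continuous_ofReal.comp (ht.mul hri)).neg).mul hmu)

lemma cont_q : Continuous (q n) := continuous_quot_mk.comp continuous_quot_mk

lemma isQuotientMap_q : IsQuotientMap (q n) :=
  IsQuotientMap.comp isQuotientMap_quot_mk isQuotientMap_quot_mk

/-! ### The two maps -/

/-- The projection `C_n(ℂ)/S¹ → C_n(ℂ)/Aff`. -/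
noncomputable def pMap : C(ConfigModCircle n, ConfigModAff n) :=
  ⟨Quot.lift (qa n) (by
      rintro c d ⟨u, hu, f, g, hf, hg, h⟩
      subst hf; subst hg
      refine Quot.sound ⟨0, u, fun h0 => by simp [h0] at hu, f, g, rfl, rfl, fun i => ?_⟩
      rw [h i]; ring),
    continuous_quot_lift _ continuous_quot_mk⟩

include hn in
lemma s_wd_perm : ∀ f g : T n, permRel n Set.univ f g → q n (Nf f) = q n (Nf g) := by
  rintro f g ⟨σ, h⟩
  exact (congrArg (qc n) (q1_Nf_perm σ h)).symm

include hn in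
lemma s_wd_aff : ∀ c d, affRel n c d →
    Quot.lift (fun f => q n (Nf f)) (s_wd_perm hn) c
      = Quot.lift (fun f => q n (Nf f)) (s_wd_perm hn) d := by
  rintro c d ⟨a, b, hb, f, g, hf, hg, h⟩
  subst hf; subst hg
  show q n (Nf f) = q n (Nf g)
  refine Quot.sound ⟨b * ((‖b‖ : ℝ) : ℂ)⁻¹, ?_, Nf f, Nf g, rfl, rfl,
    Nf_aff hn b a hb h⟩
  rw [norm_mul, norm_inv, Complex.norm_real, norm_norm]
  exact mul_inv_cancel₀ (norm_ne_zero_iff.mpr hb)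

/-- The section `C_n(ℂ)/Aff → C_n(ℂ)/S¹` given by normalization. -/
noncomputable def sMap : C(ConfigModAff n, ConfigModCircle n) :=
  ⟨Quot.lift (Quot.lift (fun f => q n (Nf f)) (s_wd_perm hn)) (s_wd_aff hn),
    continuous_quot_lift _ (continuous_quot_lift _ (cont_q.comp cont_Nf))⟩

/-! ### The homotopy -/

include hn in
lemma H_wd_circle (t : unitInterval) : ∀ c d, circleRel n c d →
    Quot.lift (fun f => q n (pth t.1 t.2 f))
      (fun f g hr => by
        rcases hr with ⟨σ, h⟩
        exact (congrArg (qc n) (q1_pth_perm t.1 t.2 σ h)).symm) c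
    = Quot.lift (fun f => q n (pth t.1 t.2 f))
      (fun f g hr => by
        rcases hr with ⟨σ, h⟩
        exact (congrArg (qc n) (q1_pth_perm t.1 t.2 σ h)).symm) d := by
  rintro c d ⟨u, hu, f, g, hf, hg, h⟩
  subst hf; subst hg
  show q n (pth t.1 t.2 f) = q n (pth t.1 t.2 g)
  exact Quot.sound ⟨u, hu, pth t.1 t.2 f, pth t.1 t.2 g, rfl, rfl,
    pth_circle hn t.1 t.2 u hu h⟩

/-- The homotopy, as a bare function. -/
noncomputable def H : unitInterval × ConfigModCircle n → ConfigModCircle n :=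
  fun p => Quot.lift _ (H_wd_circle hn p.1) p.2

include hn in
lemma cont_H : Continuous (H hn) := by
  apply (isQuotientMap_q (n := n)).continuous_lift_prod_right
  show Continuous fun p : unitInterval × T n => q n (pth p.1.1 p.1.2 p.2)
  exact cont_q.comp cont_pth

lemma pMap_eval (f : T n) : pMap (n := n) (qc n (q1 n f)) = qa n (q1 n f) := rfl

include hn in
lemma sMap_eval (f : T n) : sMap hn (qa n (q1 n f)) = q n (Nf f) := rfl

include hn in
lemma pMap_eval2 (f : T n) :
    pMap (n := n) (q n (Nf f)) = qa n (q1 n (Nf f)) := rfl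

include hn in
lemma comp_eval (f : T n) :
    ((sMap hn).comp (pMap (n := n))) (qc n (q1 n f)) = q n (Nf f) := by
  rw [ContinuousMap.comp_apply, pMap_eval, sMap_eval hn]

include hn in
lemma comp_eval2 (f : T n) :
    ((pMap (n := n)).comp (sMap hn)) (qa n (q1 n f)) = qa n (q1 n f) := by
  rw [ContinuousMap.comp_apply, sMap_eval hn, pMap_eval2 hn]
  exact (Quot.sound (affRel_Nf f)).symm

end CfgAux

/-- For every `n ≥ 1`, `C_n(ℂ)/S¹` is homotopy equivalent to
`C_n(ℂ)/(ℂ⋊ℂ*) ≅ M_{0,n+1}/Σ_n`. -/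
theorem configModCircle_homotopyEquiv_configModAff (n : ℕ) (hn : 1 ≤ n) :
    Nonempty (ContinuousMap.HomotopyEquiv (ConfigModCircle n) (ConfigModAff n)) := by
  refine ⟨⟨CfgAux.pMap (n := n), CfgAux.sMap hn, ?_, ?_⟩⟩
  · -- (sMap.comp pMap) homotopic to id
    refine ⟨(ContinuousMap.Homotopy.symm
      { toContinuousMap := ⟨CfgAux.H hn, CfgAux.cont_H hn⟩
        map_zero_left := ?_
        map_one_left := ?_ })⟩
    · intro x
      induction x using Quot.ind with
      | _ c =>
        induction c using Quot.ind with
        | _ f =>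
          show CfgAux.q n (CfgAux.pth 0 _ f) = CfgAux.q n f
          exact congrArg (CfgAux.q n) (CfgAux.pth_zero _ f)
    · intro x
      induction x using Quot.ind with
      | _ c =>
        induction c using Quot.ind with
        | _ f =>
          exact (congrArg (CfgAux.q n)
            (CfgAux.pth_one (1 : unitInterval).2 f)).trans (CfgAux.comp_eval hn f).symm
  · -- pMap.comp sMap = id
    have h : (CfgAux.pMap (n := n)).comp (CfgAux.sMap hn)
        = ContinuousMap.id (ConfigModAff n) := by
      refine ContinuousMap.ext fun x => ?_
      induction x using Quot.ind with
      | _ c =>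
        induction c using Quot.ind with
        | _ f => exact CfgAux.comp_eval2 hn f
    rw [h]
end

section
/- Let p be a prime, q ≥ 1, and n = pq + 1. Let ζ = e^{2πi/p}. The fixed-point subspace C_n(ℂ)^{ℤ/p} of C_n(ℂ), consisting of those unordered configurations that are mapped to themselves by multiplication of every point by ζ, equipped with the subspace topology, is homeomorphic to the unordered configuration space C_q(ℂ∖{0}) of q points in the punctured plane. -/
open Complex Topology

/-- The fixed-point set `C_n(ℂ)^{ℤ/p}`: unordered configurations whose underlying set of
points is invariant under multiplication by `ζ = e^{2πi/p}`. -/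
def zetaFixed (p n : ℕ) : Set (UConfig n Set.univ) :=
  {c | ∃ (f : OrdConfig n Set.univ) (σ : Equiv.Perm (Fin n)),
        Quot.mk _ f = c ∧
        ∀ i, f.1 (σ i) = Complex.exp (2 * Real.pi * Complex.I / p) * f.1 i}

namespace ZFP

variable {n m : ℕ} {X : Set ℂ}

lemma permRel_equivalence (n : ℕ) (X : Set ℂ) : Equivalence (permRel n X) where
  refl f := ⟨Equiv.refl _, rfl⟩
  symm := by
    rintro f g ⟨σ, h⟩
    exact ⟨σ.symm, by rw [h]; funext i; simp⟩
  trans := by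
    rintro f g h ⟨σ, hfg⟩ ⟨τ, hgh⟩
    exact ⟨τ.trans σ, by rw [hgh, hfg]; rfl⟩

lemma mk_eq_mk_iff {f g : OrdConfig n X} :
    Quot.mk (permRel n X) f = Quot.mk (permRel n X) g ↔ permRel n X f g := by
  rw [Quot.eq]
  exact (permRel_equivalence n X).eqvGen_iff

lemma mk_eq_of_range_eq {f g : OrdConfig n X} (h : Set.range f.1 = Set.range g.1) :
    Quot.mk (permRel n X) f = Quot.mk (permRel n X) g := by
  apply Quot.sound
  refine ⟨(Equiv.ofInjective g.1 g.2.1).trans ((Equiv.setCongr h.symm).trans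
    (Equiv.ofInjective f.1 f.2.1).symm), ?_⟩
  funext i
  simp only [Function.comp_apply, Equiv.trans_apply]
  rw [Equiv.apply_ofInjective_symm f.2.1]
  rfl

noncomputable def USet : UConfig n X → Set ℂ :=
  Quot.lift (fun f => Set.range f.1) (by
    rintro f g ⟨σ, h⟩
    show Set.range f.1 = Set.range g.1
    rw [h]
    exact (σ.surjective.range_comp f.1).symm)

@[simp] lemma USet_mk (f : OrdConfig n X) : USet (Quot.mk _ f) = Set.range f.1 := rfl

def permHomeo (σ : Equiv.Perm (Fin n)) : OrdConfig n X ≃ₜ OrdConfig n X where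
  toFun f := ⟨f.1 ∘ σ, f.2.1.comp σ.injective, fun i => f.2.2 _⟩
  invFun f := ⟨f.1 ∘ σ.symm, f.2.1.comp σ.symm.injective, fun i => f.2.2 _⟩
  left_inv f := by apply Subtype.ext; funext i; simp
  right_inv f := by apply Subtype.ext; funext i; simp
  continuous_toFun := by
    refine Continuous.subtype_mk ?_ _
    exact continuous_pi fun i => (continuous_apply (σ i)).comp continuous_subtype_val
  continuous_invFun := by
    refine Continuous.subtype_mk ?_ _
    exact continuous_pi fun i => (continuous_apply (σ.symm i)).comp continuous_subtype_val

lemma isOpenMap_mk : IsOpenMap (Quot.mk (permRel n X)) := by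
  intro U hU
  rw [← (isQuotientMap_quot_mk (r := permRel n X)).isOpen_preimage]
  have : Quot.mk (permRel n X) ⁻¹' (Quot.mk (permRel n X) '' U)
      = ⋃ σ : Equiv.Perm (Fin n), permHomeo σ '' U := by
    ext f
    simp only [Set.mem_preimage, Set.mem_image, Set.mem_iUnion]
    constructor
    · rintro ⟨g, hg, hfg⟩
      obtain ⟨σ, hσ⟩ := mk_eq_mk_iff.mp hfg
      exact ⟨σ, g, hg, Subtype.ext hσ.symm⟩
    · rintro ⟨σ, g, hg, rfl⟩
      exact ⟨g, hg, mk_eq_mk_iff.mpr ⟨σ, rfl⟩⟩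
  rw [this]
  exact isOpen_iUnion fun σ => (permHomeo σ).isOpenMap U hU

lemma isQuotientMap_restrict (Z : Set (UConfig n X)) :
    Topology.IsQuotientMap (Z.restrictPreimage (Quot.mk (permRel n X))) :=
  (isOpenMap_mk.restrictPreimage Z).isQuotientMap
    continuous_quot_mk.restrictPreimage
    (Z.restrictPreimage_surjective Quot.mk_surjective)

open scoped Classical in
noncomputable def mkCfg (n : ℕ) (X : Set ℂ) (junk : UConfig n X) (v : Fin n → ℂ) :
    UConfig n X :=
  if h : Function.Injective v ∧ ∀ i, v i ∈ X then Quot.mk _ ⟨v, h⟩ else junk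

lemma continuousOn_mkCfg (junk : UConfig n X) :
    ContinuousOn (mkCfg n X junk) {v | Function.Injective v ∧ ∀ i, v i ∈ X} := by
  rw [continuousOn_iff_continuous_restrict]
  have : {v : Fin n → ℂ | Function.Injective v ∧ ∀ i, v i ∈ X}.restrict (mkCfg n X junk)
      = fun (v : {v : Fin n → ℂ // Function.Injective v ∧ ∀ i, v i ∈ X}) =>
        Quot.mk (permRel n X) ⟨v.1, v.2⟩ := by
    funext v
    exact dif_pos v.2
  change Continuous ({v : Fin n → ℂ | Function.Injective v ∧ ∀ i, v i ∈ X}.restrict (mkCfg n X junk))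
  rw [this]
  exact continuous_quot_mk.comp (Continuous.subtype_mk continuous_subtype_val _)

lemma isOpen_inj (n : ℕ) : IsOpen {v : Fin n → ℂ | Function.Injective v} := by
  have : {v : Fin n → ℂ | Function.Injective v}
      = ⋂ (i : Fin n) (j : Fin n), {v : Fin n → ℂ | v i = v j → i = j} := by
    ext v
    simp only [Set.mem_setOf_eq, Set.mem_iInter]
    exact ⟨fun h i j => @h i j, fun h i j => h i j⟩
  rw [this]
  refine isOpen_iInter_of_finite fun i => isOpen_iInter_of_finite fun j => ?_
  by_cases hij : i = j
  · subst hij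
    have : {v : Fin n → ℂ | v i = v i → i = i} = Set.univ := by
      ext v; simp
    rw [this]
    exact isOpen_univ
  · have : {v : Fin n → ℂ | v i = v j → i = j} = {v : Fin n → ℂ | v i ≠ v j} := by
      ext v; simp only [Set.mem_setOf_eq]; tauto
    rw [this]
    exact isOpen_ne_fun (continuous_apply i) (continuous_apply j)

lemma isOpen_good (n : ℕ) :
    IsOpen {v : Fin n → ℂ | Function.Injective v ∧ ∀ i, v i ∈ {z : ℂ | z ≠ 0}} := by
  have : {v : Fin n → ℂ | Function.Injective v ∧ ∀ i, v i ∈ {z : ℂ | z ≠ 0}}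
      = {v : Fin n → ℂ | Function.Injective v} ∩ ⋂ i, {v : Fin n → ℂ | v i ≠ 0} := by
    ext v; simp [Set.mem_iInter]
  rw [this]
  exact (isOpen_inj n).inter (isOpen_iInter_of_finite fun i =>
    isOpen_ne_fun (continuous_apply i) continuous_const)

lemma isOpen_injUniv (n : ℕ) :
    IsOpen {v : Fin n → ℂ | Function.Injective v ∧ ∀ i, v i ∈ (Set.univ : Set ℂ)} := by
  have : {v : Fin n → ℂ | Function.Injective v ∧ ∀ i, v i ∈ (Set.univ : Set ℂ)}
      = {v : Fin n → ℂ | Function.Injective v} := by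
    ext v; simp
  rw [this]; exact isOpen_inj n

end ZFP

namespace ZFP

noncomputable def zeta (p : ℕ) : ℂ := Complex.exp (2 * Real.pi * Complex.I / p)

section zetaLemmas

variable {p : ℕ}

lemma zeta_prim (hp : p.Prime) : IsPrimitiveRoot (zeta p) p := Complex.isPrimitiveRoot_exp p hp.ne_zero

lemma zeta_pow_p (hp : p.Prime) : zeta p ^ p = 1 := (zeta_prim hp).pow_eq_one

lemma zeta_ne_zero : zeta p ≠ 0 := Complex.exp_ne_zero _

lemma zeta_pow_mod (hp : p.Prime) (a : ℕ) : zeta p ^ (a % p) = zeta p ^ a := by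
  conv_rhs => rw [← Nat.mod_add_div a p, pow_add, pow_mul, zeta_pow_p hp, one_pow, mul_one]

lemma zeta_pow_pow (hp : p.Prime) (j : ℕ) : (zeta p ^ j) ^ p = 1 := by
  rw [← pow_mul, mul_comm, pow_mul, zeta_pow_p hp, one_pow]

lemma roots_eq_orbit (hp : p.Prime) {w r : ℂ} (hw : w ≠ 0) (hr : r ^ p = w) :
    {z : ℂ | z ^ p = w} = Set.range (fun j : Fin p => zeta p ^ (j : ℕ) * r) := by
  have hr0 : r ≠ 0 := fun h => hw (by rw [← hr, h, zero_pow hp.ne_zero])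
  ext z
  simp only [Set.mem_setOf_eq, Set.mem_range]
  constructor
  · intro hz
    have h1 : (z / r) ^ p = 1 := by rw [div_pow, hz, hr, div_self hw]
    haveI : NeZero p := ⟨hp.ne_zero⟩
    obtain ⟨i, hi, hzi⟩ := (zeta_prim hp).eq_pow_of_pow_eq_one h1
    exact ⟨⟨i, hi⟩, by rw [hzi, div_mul_cancel₀ _ hr0]⟩
  · rintro ⟨j, rfl⟩
    rw [mul_pow, zeta_pow_pow hp, one_mul, hr]

lemma struct (hp : p.Prime) {q : ℕ} (S : Finset ℂ) (hcard : S.card = p * q + 1)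
    (hinv : ∀ z ∈ S, zeta p * z ∈ S) :
    (0 : ℂ) ∈ S ∧ ((S.erase 0).image (· ^ p)).card = q := by
  classical
  set T := S.erase 0 with hTdef
  have hTinv : ∀ z ∈ T, zeta p * z ∈ T := by
    intro z hz
    rcases Finset.mem_erase.mp hz with ⟨hz0, hzS⟩
    exact Finset.mem_erase.mpr ⟨mul_ne_zero (zeta_ne_zero) hz0, hinv z hzS⟩
  have hTpow : ∀ (k : ℕ), ∀ z ∈ T, zeta p ^ k * z ∈ T := by
    intro k
    induction k with
    | zero => intro z hz; simpa using hz
    | succ k ih =>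
      intro z hz
      have h2 := hTinv _ (ih z hz)
      rw [← mul_assoc, mul_comm (zeta p) (zeta p ^ k), ← pow_succ] at h2
      exact h2
  set W := T.image (· ^ p) with hWdef
  have hfiber : ∀ w ∈ W, (T.filter (fun z => z ^ p = w)).card = p := by
    intro w hw
    obtain ⟨z₀, hz₀T, hz₀⟩ := Finset.mem_image.mp hw
    have hz₀0 : z₀ ≠ 0 := (Finset.mem_erase.mp hz₀T).1
    have hw0 : w ≠ 0 := by rw [← hz₀]; exact pow_ne_zero _ hz₀0
    have hfe : T.filter (fun z => z ^ p = w)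
        = (Finset.range p).image (fun k => zeta p ^ k * z₀) := by
      ext z
      simp only [Finset.mem_filter, Finset.mem_image, Finset.mem_range]
      constructor
      · rintro ⟨hzT, hzp⟩
        have h1 : (z / z₀) ^ p = 1 := by rw [div_pow, hzp, hz₀, div_self hw0]
        haveI : NeZero p := ⟨hp.ne_zero⟩
        obtain ⟨i, hi, hzi⟩ := (zeta_prim hp).eq_pow_of_pow_eq_one h1
        exact ⟨i, hi, by rw [hzi, div_mul_cancel₀ _ hz₀0]⟩
      · rintro ⟨k, hk, rfl⟩
        exact ⟨hTpow k z₀ hz₀T, by rw [mul_pow, zeta_pow_pow hp, one_mul, hz₀]⟩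
    rw [hfe, Finset.card_image_of_injOn, Finset.card_range]
    intro a ha b hb hab
    simp only [Finset.coe_range, Set.mem_Iio] at ha hb
    exact (zeta_prim hp).pow_inj ha hb (mul_right_cancel₀ hz₀0 hab)
  have hTcard : T.card = W.card * p := by
    rw [Finset.card_eq_sum_card_image (· ^ p) T, ← hWdef,
      Finset.sum_congr rfl hfiber, Finset.sum_const, smul_eq_mul]
  have h0 : (0 : ℂ) ∈ S := by
    by_contra h0
    have hTS : T = S := Finset.erase_eq_of_notMem h0
    rw [hTS, hcard] at hTcard
    have hd : p ∣ p * q + 1 := hTcard ▸ dvd_mul_left p W.card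
    have : p ∣ 1 := (Nat.dvd_add_right (Dvd.intro q rfl)).mp hd
    exact hp.one_lt.ne' (Nat.eq_one_of_dvd_one this)
  have hT : T.card = p * q := by
    rw [hTdef, Finset.card_erase_of_mem h0, hcard]
    rfl
  refine ⟨h0, ?_⟩
  have : W.card * p = p * q := by rw [← hTcard, hT]
  have := this.trans (mul_comm p q)
  exact Nat.eq_of_mul_eq_mul_right hp.pos this

end zetaLemmas

end ZFP

namespace ZFP

variable (p q : ℕ)

/-- The configuration `{0} ∪ {ζ^j · r i}` as an ordered tuple. -/
noncomputable def vecOf (r : Fin q → ℂ) : Fin (p * q + 1) → ℂ :=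
  Fin.cons 0 (fun k => zeta p ^ (((finProdFinEquiv.symm k : Fin p × Fin q).1 : Fin p) : ℕ)
    * r (finProdFinEquiv.symm k).2)

lemma range_vecOf (hp : p.Prime) {w r : Fin q → ℂ} (hw : ∀ i, w i ≠ 0)
    (hr : ∀ i, r i ^ p = w i) :
    Set.range (vecOf p q r) = insert 0 {z : ℂ | z ^ p ∈ Set.range w} := by
  rw [vecOf, Fin.range_cons]
  congr 1
  have h1 : Set.range (fun k : Fin (p * q) =>
        zeta p ^ (((finProdFinEquiv.symm k : Fin p × Fin q).1 : Fin p) : ℕ)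
          * r (finProdFinEquiv.symm k).2)
      = Set.range (fun ji : Fin p × Fin q => zeta p ^ ((ji.1 : Fin p) : ℕ) * r ji.2) := by
    exact finProdFinEquiv.symm.surjective.range_comp
      (fun ji : Fin p × Fin q => zeta p ^ ((ji.1 : Fin p) : ℕ) * r ji.2)
  rw [h1]
  ext z
  simp only [Set.mem_range, Set.mem_setOf_eq, Prod.exists]
  constructor
  · rintro ⟨j, i, rfl⟩
    exact ⟨i, by rw [mul_pow, zeta_pow_pow hp, one_mul, hr i]⟩
  · rintro ⟨i, hi⟩
    have : z ∈ {z : ℂ | z ^ p = w i} := hi.symm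
    rw [roots_eq_orbit hp (hw i) (hr i)] at this
    obtain ⟨j, hj⟩ := this
    exact ⟨j, i, hj⟩

lemma vecOf_injective (hp : p.Prime) {w r : Fin q → ℂ} (hw : ∀ i, w i ≠ 0)
    (hwinj : Function.Injective w) (hr : ∀ i, r i ^ p = w i) :
    Function.Injective (vecOf p q r) := by
  have hr0 : ∀ i, r i ≠ 0 := fun i h => hw i (by rw [← hr i, h, zero_pow hp.ne_zero])
  have hgz : ∀ (j : Fin p) (i : Fin q), zeta p ^ (j : ℕ) * r i ≠ 0 :=
    fun j i => mul_ne_zero (pow_ne_zero _ (zeta_ne_zero)) (hr0 i)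
  have key : ∀ (j j' : Fin p) (i i' : Fin q),
      zeta p ^ (j : ℕ) * r i = zeta p ^ (j' : ℕ) * r i' → j = j' ∧ i = i' := by
    intro j j' i i' h
    have hpow : w i = w i' := by
      rw [← hr i, ← hr i']
      calc r i ^ p = (zeta p ^ (j : ℕ)) ^ p * r i ^ p := by rw [zeta_pow_pow hp, one_mul]
      _ = (zeta p ^ (j : ℕ) * r i) ^ p := by rw [mul_pow]
      _ = (zeta p ^ (j' : ℕ) * r i') ^ p := by rw [h]
      _ = (zeta p ^ (j' : ℕ)) ^ p * r i' ^ p := by rw [mul_pow]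
      _ = r i' ^ p := by rw [zeta_pow_pow hp, one_mul]
    have hii : i = i' := hwinj hpow
    subst hii
    have hzz : zeta p ^ (j : ℕ) = zeta p ^ (j' : ℕ) := mul_right_cancel₀ (hr0 i) h
    exact ⟨Fin.ext ((zeta_prim hp).pow_inj j.isLt j'.isLt hzz), rfl⟩
  intro a b hab
  induction a using Fin.cases with
  | zero =>
    induction b using Fin.cases with
    | zero => rfl
    | succ l =>
      exfalso
      rw [vecOf, Fin.cons_zero, Fin.cons_succ] at hab
      exact hgz _ _ hab.symm
  | succ k =>
    induction b using Fin.cases with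
    | zero =>
      exfalso
      rw [vecOf, Fin.cons_zero, Fin.cons_succ] at hab
      exact hgz _ _ hab
    | succ l =>
      rw [vecOf, Fin.cons_succ, Fin.cons_succ] at hab
      obtain ⟨h1, h2⟩ := key _ _ _ _ hab
      have : (finProdFinEquiv.symm k : Fin p × Fin q) = finProdFinEquiv.symm l :=
        Prod.ext h1 h2
      have := finProdFinEquiv.symm.injective this
      rw [this]

noncomputable def tauPerm [NeZero p] : Equiv.Perm (Fin (p * q)) :=
  (Equiv.permCongr finProdFinEquiv) ((Equiv.addRight (1 : Fin p)).prodCongr (Equiv.refl (Fin q)))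

/-- The permutation fixing `0` and shifting each `ζ`-orbit cyclically. -/
noncomputable def shiftPerm [NeZero p] : Equiv.Perm (Fin (p * q + 1)) :=
  { toFun := Fin.cons 0 (Fin.succ ∘ tauPerm p q)
    invFun := Fin.cons 0 (Fin.succ ∘ (tauPerm p q).symm)
    left_inv := by
      intro i
      induction i using Fin.cases with
      | zero => simp
      | succ k => simp
    right_inv := by
      intro i
      induction i using Fin.cases with
      | zero => simp
      | succ k => simp }

lemma vecOf_shift (hp : p.Prime) (r : Fin q → ℂ) :
    haveI : NeZero p := ⟨hp.ne_zero⟩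
    ∀ m, vecOf p q r (shiftPerm p q m) = zeta p * vecOf p q r m := by
  haveI : NeZero p := ⟨hp.ne_zero⟩
  intro m
  induction m using Fin.cases with
  | zero =>
    have h0 : (shiftPerm p q) (0 : Fin (p * q + 1)) = 0 := rfl
    rw [h0]
    show (0 : ℂ) = zeta p * (0 : ℂ)
    rw [mul_zero]
  | succ k =>
    have hs : (shiftPerm p q) k.succ = (tauPerm p q k).succ := rfl
    rw [hs, vecOf, Fin.cons_succ, Fin.cons_succ, tauPerm]
    rw [Equiv.permCongr_apply, Equiv.symm_apply_apply]
    simp only [Equiv.prodCongr_apply, Prod.map_fst, Prod.map_snd, Equiv.coe_addRight,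
      Equiv.refl_apply]
    rw [← mul_assoc]
    congr 1
    have hval : (((finProdFinEquiv.symm k : Fin p × Fin q).1 + 1 : Fin p) : ℕ)
        = (((finProdFinEquiv.symm k : Fin p × Fin q).1 : ℕ) + 1) % p := by
      rw [Fin.val_add]
      congr 1
      rw [Fin.val_one']
      rw [Nat.mod_eq_of_lt hp.one_lt]
    rw [hval, zeta_pow_mod hp, pow_succ, mul_comm]

end ZFP

namespace ZFP

variable (p q : ℕ)

noncomputable def rt (p : ℕ) (v : ℂ) : ℂ := v ^ ((p : ℂ)⁻¹)

lemma rt_pow {p : ℕ} (hp : p.Prime) (v : ℂ) : rt p v ^ p = v :=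
  Complex.cpow_nat_inv_pow v hp.ne_zero

noncomputable def R0 (hp : p.Prime) (w : OrdConfig q {z : ℂ | z ≠ 0}) :
    UConfig (p * q + 1) Set.univ :=
  Quot.mk _ ⟨vecOf p q (fun i => rt p (w.1 i)),
    vecOf_injective p q hp (fun i => w.2.2 i) w.2.1 (fun i => rt_pow hp _),
    fun _ => Set.mem_univ _⟩

lemma USet_R0 (hp : p.Prime) (w : OrdConfig q {z : ℂ | z ≠ 0}) :
    USet (R0 p q hp w) = insert 0 {z : ℂ | z ^ p ∈ Set.range w.1} := by
  rw [R0, USet_mk]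
  exact range_vecOf p q hp (fun i => w.2.2 i) (fun i => rt_pow hp _)

lemma R0_mem (hp : p.Prime) (w : OrdConfig q {z : ℂ | z ≠ 0}) :
    R0 p q hp w ∈ zetaFixed p (p * q + 1) := by
  haveI : NeZero p := ⟨hp.ne_zero⟩
  refine ⟨⟨vecOf p q (fun i => rt p (w.1 i)),
    vecOf_injective p q hp (fun i => w.2.2 i) w.2.1 (fun i => rt_pow hp _),
    fun _ => Set.mem_univ _⟩, shiftPerm p q, rfl, fun m => ?_⟩
  show vecOf p q (fun i => rt p (w.1 i)) ((shiftPerm p q) m)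
    = zeta p * vecOf p q (fun i => rt p (w.1 i)) m
  exact vecOf_shift p q hp _ m

lemma R0_eq_of_rel (hp : p.Prime) {w w' : OrdConfig q {z : ℂ | z ≠ 0}}
    (h : permRel q {z : ℂ | z ≠ 0} w w') : R0 p q hp w = R0 p q hp w' := by
  apply mk_eq_of_range_eq
  obtain ⟨ρ, hρ⟩ := h
  show Set.range (vecOf p q (fun i => rt p (w.1 i)))
    = Set.range (vecOf p q (fun i => rt p (w'.1 i)))
  rw [range_vecOf p q hp (fun i => w.2.2 i) (fun i => rt_pow hp _),
    range_vecOf p q hp (fun i => w'.2.2 i) (fun i => rt_pow hp _), hρ,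
    ρ.surjective.range_comp]

noncomputable def Rmap (hp : p.Prime) :
    UConfig q {z : ℂ | z ≠ 0} → ↥(zetaFixed p (p * q + 1)) :=
  fun c => ⟨Quot.lift (R0 p q hp) (fun _ _ h => R0_eq_of_rel p q hp h) c, by
    induction c using Quot.ind with
    | _ w => exact R0_mem p q hp w⟩

lemma continuous_R0 (hp : p.Prime) : Continuous (R0 p q hp) := by
  rw [continuous_iff_continuousAt]
  intro w₀
  have ha0 : ∀ i, w₀.1 i ≠ 0 := fun i => w₀.2.2 i
  set br : Fin q → ℂ → ℂ :=
    fun i v => w₀.1 i ^ ((p : ℂ)⁻¹) * (v / w₀.1 i) ^ ((p : ℂ)⁻¹) with hbr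
  have hbrpow : ∀ i v, br i v ^ p = v := by
    intro i v
    rw [hbr]
    simp only
    rw [mul_pow, Complex.cpow_nat_inv_pow _ hp.ne_zero, Complex.cpow_nat_inv_pow _ hp.ne_zero,
      mul_comm, div_mul_cancel₀ v (ha0 i)]
  set junkN : UConfig (p * q + 1) Set.univ := R0 p q hp w₀ with hjunk
  have hkey : ∀ w : OrdConfig q {z : ℂ | z ≠ 0},
      R0 p q hp w = mkCfg (p * q + 1) Set.univ junkN (vecOf p q (fun i => br i (w.1 i))) := by
    intro w
    have hcond : Function.Injective (vecOf p q (fun i => br i (w.1 i)))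
        ∧ ∀ k, vecOf p q (fun i => br i (w.1 i)) k ∈ Set.univ :=
      ⟨vecOf_injective p q hp (fun i => w.2.2 i) w.2.1 (fun i => hbrpow i _),
        fun _ => trivial⟩
    rw [mkCfg, dif_pos hcond]
    apply mk_eq_of_range_eq
    show Set.range (vecOf p q (fun i => rt p (w.1 i)))
      = Set.range (vecOf p q (fun i => br i (w.1 i)))
    rw [range_vecOf p q hp (fun i => w.2.2 i) (fun i => rt_pow hp _),
      range_vecOf p q hp (fun i => w.2.2 i) (fun i => hbrpow i _)]
  have hfun : R0 p q hp
      = fun w => mkCfg (p * q + 1) Set.univ junkN (vecOf p q (fun i => br i (w.1 i))) :=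
    funext hkey
  rw [hfun]
  have hF : ContinuousAt
      (fun w : OrdConfig q {z : ℂ | z ≠ 0} => vecOf p q (fun i => br i (w.1 i))) w₀ := by
    apply continuousAt_pi.mpr
    intro m
    induction m using Fin.cases with
    | zero =>
      have hz : (fun w : OrdConfig q {z : ℂ | z ≠ 0} =>
          vecOf p q (fun i => br i (w.1 i)) 0) = fun _ => (0 : ℂ) := rfl
      rw [hz]
      exact continuousAt_const
    | succ k =>
      have hz : (fun w : OrdConfig q {z : ℂ | z ≠ 0} =>
            vecOf p q (fun i => br i (w.1 i)) k.succ)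
          = fun w => zeta p ^ (((finProdFinEquiv.symm k : Fin p × Fin q).1 : Fin p) : ℕ)
              * br (finProdFinEquiv.symm k).2 (w.1 (finProdFinEquiv.symm k).2) := by
        funext w
        rw [vecOf, Fin.cons_succ]
      rw [hz]
      apply ContinuousAt.mul continuousAt_const
      set i := (finProdFinEquiv.symm k : Fin p × Fin q).2 with hi
      rw [hbr]
      simp only
      apply ContinuousAt.mul continuousAt_const
      have hvc : ContinuousAt
          (fun w : OrdConfig q {z : ℂ | z ≠ 0} => w.1 i / w₀.1 i) w₀ :=
        (((continuous_apply i).comp continuous_subtype_val).continuousAt).div_const _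
      have hcp : ContinuousAt (fun z : ℂ => z ^ ((p : ℂ)⁻¹))
          ((fun w : OrdConfig q {z : ℂ | z ≠ 0} => w.1 i / w₀.1 i) w₀) := by
        have hone : (fun w : OrdConfig q {z : ℂ | z ≠ 0} => w.1 i / w₀.1 i) w₀ = 1 :=
          div_self (ha0 i)
        rw [hone]
        exact continuousAt_cpow_const one_mem_slitPlane
      have hcomp : ContinuousAt ((fun z : ℂ => z ^ ((p : ℂ)⁻¹)) ∘
          (fun w : OrdConfig q {z : ℂ | z ≠ 0} => w.1 i / w₀.1 i)) w₀ :=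
        ContinuousAt.comp (f := fun w : OrdConfig q {z : ℂ | z ≠ 0} => w.1 i / w₀.1 i)
          hcp hvc
      exact hcomp
  have hmk : ContinuousAt (mkCfg (p * q + 1) Set.univ junkN)
      (vecOf p q (fun i => br i (w₀.1 i))) := by
    apply (continuousOn_mkCfg junkN).continuousAt
    apply (isOpen_injUniv (p * q + 1)).mem_nhds
    exact ⟨vecOf_injective p q hp (fun i => w₀.2.2 i) w₀.2.1 (fun i => hbrpow i _),
      fun _ => trivial⟩
  have hcomp2 : ContinuousAt ((mkCfg (p * q + 1) Set.univ junkN) ∘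
      (fun w : OrdConfig q {z : ℂ | z ≠ 0} => vecOf p q (fun i => br i (w.1 i)))) w₀ :=
    ContinuousAt.comp
      (f := fun w : OrdConfig q {z : ℂ | z ≠ 0} => vecOf p q (fun i => br i (w.1 i)))
      hmk hF
  exact hcomp2

lemma continuous_Rmap (hp : p.Prime) : Continuous (Rmap p q hp) := by
  apply Continuous.subtype_mk
  exact continuous_quot_lift _ (continuous_R0 p q hp)

end ZFP

namespace ZFP

lemma eq_iff_USet {n : ℕ} {X : Set ℂ} {c d : UConfig n X} : c = d ↔ USet c = USet d := by
  constructor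
  · rintro rfl; rfl
  · induction c using Quot.ind with
  | _ f =>
    induction d using Quot.ind with
    | _ g =>
      intro h
      exact mk_eq_of_range_eq h

variable (p q : ℕ)

lemma mem_struct (hp : p.Prime) {f : OrdConfig (p * q + 1) Set.univ}
    (hf : Quot.mk (permRel (p * q + 1) Set.univ) f ∈ zetaFixed p (p * q + 1)) :
    (0 : ℂ) ∈ Set.range f.1 ∧ (∀ z ∈ Set.range f.1, zeta p * z ∈ Set.range f.1)
      ∧ (((Finset.image f.1 Finset.univ).erase 0).image (· ^ p)).card = q := by
  classical
  obtain ⟨g, σ, hgf, hsym⟩ := hf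
  have hrange : Set.range g.1 = Set.range f.1 := by
    obtain ⟨ρ, hρ⟩ := mk_eq_mk_iff.mp hgf
    rw [hρ]
    exact (ρ.surjective.range_comp g.1).symm
  have hinv : ∀ z ∈ Set.range f.1, zeta p * z ∈ Set.range f.1 := by
    intro z hz
    rw [← hrange] at hz ⊢
    obtain ⟨i, rfl⟩ := hz
    exact ⟨σ i, hsym i⟩
  set Sf := Finset.image f.1 Finset.univ with hSf
  have hcoe : (Sf : Set ℂ) = Set.range f.1 := by
    rw [hSf, Finset.coe_image, Finset.coe_univ, Set.image_univ]
  have hcard : Sf.card = p * q + 1 := by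
    rw [hSf, Finset.card_image_of_injective _ f.2.1, Finset.card_univ, Fintype.card_fin]
  have hinvF : ∀ z ∈ Sf, zeta p * z ∈ Sf := by
    intro z hz
    have h1 : z ∈ Set.range f.1 := by rw [← hcoe]; exact_mod_cast hz
    have h2 := hinv z h1
    rw [← hcoe] at h2
    exact_mod_cast h2
  obtain ⟨h0, hq'⟩ := struct hp Sf hcard hinvF
  refine ⟨?_, hinv, hq'⟩
  rw [← hcoe]
  exact_mod_cast h0

lemma exists_listing (hp : p.Prime) (c : UConfig (p * q + 1) Set.univ)
    (hc : c ∈ zetaFixed p (p * q + 1)) :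
    ∃ w : OrdConfig q {z : ℂ | z ≠ 0},
      Set.range w.1 = (fun z => z ^ p) '' (USet c \ {0}) := by
  classical
  obtain ⟨f, rfl⟩ := Quot.exists_rep c
  obtain ⟨h0, hinv, hcard⟩ := mem_struct p q hp hc
  set Sf := Finset.image f.1 Finset.univ with hSf
  set Wf := ((Sf.erase 0).image (· ^ p)) with hWf
  have hScoe : (Sf : Set ℂ) = Set.range f.1 := by
    rw [hSf, Finset.coe_image, Finset.coe_univ, Set.image_univ]
  have hWcoe : (Wf : Set ℂ)
      = (fun z => z ^ p) '' (USet (Quot.mk (permRel (p * q + 1) Set.univ) f) \ {0}) := by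
    rw [hWf, Finset.coe_image, Finset.coe_erase, USet_mk, hScoe]
  have hWne : ∀ x ∈ Wf, x ≠ 0 := by
    intro x hx
    obtain ⟨y, hy, rfl⟩ := Finset.mem_image.mp hx
    exact pow_ne_zero _ (Finset.mem_erase.mp hy).1
  have hqcard : Wf.card = q := hcard
  set e := Wf.equivFin with he
  set w : Fin q → ℂ := fun k => (e.symm (Fin.cast hqcard.symm k) : ℂ) with hwdef
  have hrw : Set.range w = (Wf : Set ℂ) := by
    ext z
    constructor
    · rintro ⟨k, rfl⟩
      exact (e.symm (Fin.cast hqcard.symm k)).2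
    · intro hz
      refine ⟨Fin.cast hqcard (e ⟨z, hz⟩), ?_⟩
      rw [hwdef]
      simp only
      have hcast : Fin.cast hqcard.symm (Fin.cast hqcard (e ⟨z, hz⟩)) = e ⟨z, hz⟩ :=
        Fin.ext rfl
      rw [hcast, Equiv.symm_apply_apply]
  refine ⟨⟨w, ?_, ?_⟩, ?_⟩
  · intro a b hab
    have h1 : e.symm (Fin.cast hqcard.symm a) = e.symm (Fin.cast hqcard.symm b) :=
      Subtype.coe_injective hab
    have h2 := e.symm.injective h1
    have h3 := congrArg Fin.val h2
    exact Fin.ext h3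
  · intro k
    exact hWne _ (e.symm (Fin.cast hqcard.symm k)).2
  · rw [← hWcoe]
    exact hrw

noncomputable def Pmap (hp : p.Prime) :
    ↥(zetaFixed p (p * q + 1)) → UConfig q {z : ℂ | z ≠ 0} :=
  fun c => Quot.mk _ (exists_listing p q hp c.1 c.2).choose

lemma Pmap_eq (hp : p.Prime) (c : ↥(zetaFixed p (p * q + 1)))
    {w : OrdConfig q {z : ℂ | z ≠ 0}}
    (hw : Set.range w.1 = (fun z => z ^ p) '' (USet c.1 \ {0})) :
    Pmap p q hp c = Quot.mk _ w :=
  mk_eq_of_range_eq (by rw [(exists_listing p q hp c.1 c.2).choose_spec, hw])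

lemma P_R (hp : p.Prime) (d : UConfig q {z : ℂ | z ≠ 0}) :
    Pmap p q hp (Rmap p q hp d) = d := by
  induction d using Quot.ind with
  | _ w =>
    refine Pmap_eq p q hp _ ?_
    have hR : (Rmap p q hp (Quot.mk _ w)).1 = R0 p q hp w := rfl
    rw [hR, USet_R0]
    have h0A : (0 : ℂ) ∉ {z : ℂ | z ^ p ∈ Set.range w.1} := by
      simp only [Set.mem_setOf_eq]
      rw [zero_pow hp.ne_zero]
      rintro ⟨i, hi⟩
      exact w.2.2 i hi
    rw [Set.insert_diff_self_of_notMem h0A]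
    ext z
    simp only [Set.mem_image, Set.mem_setOf_eq, Set.mem_range]
    constructor
    · rintro ⟨i, rfl⟩
      exact ⟨rt p (w.1 i), by rw [rt_pow hp]; exact ⟨i, rfl⟩, by rw [rt_pow hp]⟩
    · rintro ⟨x, hx, rfl⟩
      exact hx

lemma R_P (hp : p.Prime) (c : ↥(zetaFixed p (p * q + 1))) :
    Rmap p q hp (Pmap p q hp c) = c := by
  apply Subtype.ext
  obtain ⟨c, hc⟩ := c
  obtain ⟨f, rfl⟩ := Quot.exists_rep c
  obtain ⟨h0, hinv, _⟩ := mem_struct p q hp hc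
  have hpowmem : ∀ (k : ℕ), ∀ z ∈ Set.range f.1, zeta p ^ k * z ∈ Set.range f.1 := by
    intro k
    induction k with
    | zero => intro z hz; simpa using hz
    | succ k ih =>
      intro z hz
      have h2 := hinv _ (ih z hz)
      rw [← mul_assoc, mul_comm (zeta p) (zeta p ^ k), ← pow_succ] at h2
      exact h2
  set w := (exists_listing p q hp (Quot.mk _ f) hc).choose with hwdef
  have hws := (exists_listing p q hp (Quot.mk _ f) hc).choose_spec
  show R0 p q hp w = Quot.mk _ f
  rw [eq_iff_USet, USet_R0, USet_mk]
  have hws2 : Set.range w.1 = (fun z => z ^ p) '' (Set.range f.1 \ {0}) := hws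
  ext z
  simp only [Set.mem_insert_iff, Set.mem_setOf_eq]
  constructor
  · rintro (rfl | hz)
    · exact h0
    · rw [hws2] at hz
      obtain ⟨y, ⟨hy1, hy2⟩, hy3⟩ := hz
      have hy0 : y ≠ 0 := hy2
      have : z ∈ {z : ℂ | z ^ p = y ^ p} := hy3.symm
      rw [roots_eq_orbit hp (pow_ne_zero p hy0) rfl] at this
      obtain ⟨j, hj⟩ := this
      rw [← hj]
      exact hpowmem _ y hy1
  · intro hz
    by_cases hz0 : z = 0
    · exact Or.inl hz0
    · refine Or.inr ?_
      rw [hws2]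
      exact ⟨z, ⟨hz, hz0⟩, rfl⟩

end ZFP

namespace ZFP

variable (p q : ℕ)

lemma continuous_Pmap (hp : p.Prime) : Continuous (Pmap p q hp) := by
  have hqm := isQuotientMap_restrict (n := p * q + 1) (X := Set.univ) (zetaFixed p (p * q + 1))
  rw [hqm.continuous_iff, continuous_iff_continuousAt]
  intro f₀
  have hw₀ := (exists_listing p q hp
    (Quot.mk (permRel (p * q + 1) Set.univ) f₀.1) f₀.2).choose_spec
  set w₀ := (exists_listing p q hp
    (Quot.mk (permRel (p * q + 1) Set.univ) f₀.1) f₀.2).choose with hw₀def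
  have hw₀' : Set.range w₀.1 = (fun z => z ^ p) '' (Set.range f₀.1.1 \ {0}) := hw₀
  have hidx : ∀ k : Fin q, ∃ idx : Fin (p * q + 1),
      f₀.1.1 idx ≠ 0 ∧ (f₀.1.1 idx) ^ p = w₀.1 k := by
    intro k
    have hm : w₀.1 k ∈ Set.range w₀.1 := ⟨k, rfl⟩
    rw [hw₀'] at hm
    obtain ⟨y, ⟨hy1, hy2⟩, hy3⟩ := hm
    obtain ⟨idx, rfl⟩ := hy1
    exact ⟨idx, hy2, hy3⟩
  choose ι hι1 hι2 using hidx
  set Φ : (Fin (p * q + 1) → ℂ) → (Fin q → ℂ) := fun v k => (v (ι k)) ^ p with hΦ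
  have hΦcont : Continuous Φ := continuous_pi fun k => (continuous_apply (ι k)).pow p
  have hΦf₀ : Φ (f₀.1.1) = w₀.1 := funext fun k => hι2 k
  have hmemGood : Φ f₀.1.1 ∈
      {v : Fin q → ℂ | Function.Injective v ∧ ∀ i, v i ∈ {z : ℂ | z ≠ 0}} := by
    rw [hΦf₀]
    exact w₀.2
  set junkQ : UConfig q {z : ℂ | z ≠ 0} := Quot.mk _ w₀ with hjq
  have hclaim : ∀ g : ↥(Quot.mk (permRel (p * q + 1) Set.univ) ⁻¹' zetaFixed p (p * q + 1)),
      Φ g.1.1 ∈ {v : Fin q → ℂ | Function.Injective v ∧ ∀ i, v i ∈ {z : ℂ | z ≠ 0}} →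
      Pmap p q hp ((zetaFixed p (p * q + 1)).restrictPreimage
          (Quot.mk (permRel (p * q + 1) Set.univ)) g)
        = mkCfg q {z : ℂ | z ≠ 0} junkQ (Φ g.1.1) := by
    intro g hg
    have hcond : Function.Injective (Φ g.1.1) ∧ ∀ i, Φ (g.1.1) i ∈ {z : ℂ | z ≠ 0} := hg
    rw [mkCfg, dif_pos hcond]
    apply Pmap_eq
    classical
    obtain ⟨h0g, hinvg, hcardg⟩ := mem_struct p q hp g.2
    set Sf := Finset.image g.1.1 Finset.univ with hSf
    set Wf := ((Sf.erase 0).image (· ^ p)) with hWf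
    set sel := Finset.image (Φ g.1.1) Finset.univ with hsel
    have hsub : sel ⊆ Wf := by
      intro x hx
      obtain ⟨k, _, rfl⟩ := Finset.mem_image.mp hx
      apply Finset.mem_image_of_mem
      apply Finset.mem_erase.mpr
      refine ⟨?_, Finset.mem_image_of_mem _ (Finset.mem_univ _)⟩
      intro h
      refine hcond.2 k ?_
      show (g.1.1 (ι k)) ^ p = 0
      rw [h, zero_pow hp.ne_zero]
    have hcards : sel.card = q := by
      rw [hsel, Finset.card_image_of_injective _ hcond.1, Finset.card_univ, Fintype.card_fin]
    have hseleq : sel = Wf := Finset.eq_of_subset_of_card_le hsub (by rw [hcards, hcardg])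
    have hrsel : Set.range (Φ g.1.1) = (Wf : Set ℂ) := by
      rw [← hseleq, hsel, Finset.coe_image, Finset.coe_univ, Set.image_univ]
    have hScoe : (Sf : Set ℂ) = Set.range g.1.1 := by
      rw [hSf, Finset.coe_image, Finset.coe_univ, Set.image_univ]
    show Set.range (Φ g.1.1) = (fun z => z ^ p) ''
      (USet (((zetaFixed p (p * q + 1)).restrictPreimage
        (Quot.mk (permRel (p * q + 1) Set.univ)) g).1) \ {0})
    have hUg : USet (((zetaFixed p (p * q + 1)).restrictPreimage
        (Quot.mk (permRel (p * q + 1) Set.univ)) g).1) = Set.range g.1.1 := rfl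
    rw [hrsel, hUg, hWf, Finset.coe_image, Finset.coe_erase, hScoe]
  have hmkcont : ContinuousAt (mkCfg q {z : ℂ | z ≠ 0} junkQ) (Φ f₀.1.1) :=
    (continuousOn_mkCfg junkQ).continuousAt ((isOpen_good q).mem_nhds hmemGood)
  have hvalcont : Continuous (fun g : ↥(Quot.mk (permRel (p * q + 1) Set.univ) ⁻¹'
      zetaFixed p (p * q + 1)) => g.1.1) :=
    continuous_subtype_val.comp continuous_subtype_val
  have hrhs : ContinuousAt ((mkCfg q {z : ℂ | z ≠ 0} junkQ)
      ∘ (fun g : ↥(Quot.mk (permRel (p * q + 1) Set.univ) ⁻¹' zetaFixed p (p * q + 1)) =>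
        Φ g.1.1)) f₀ :=
    ContinuousAt.comp
      (f := fun g : ↥(Quot.mk (permRel (p * q + 1) Set.univ) ⁻¹' zetaFixed p (p * q + 1)) =>
        Φ g.1.1)
      hmkcont ((hΦcont.comp hvalcont).continuousAt)
  apply ContinuousAt.congr hrhs
  have hnhds : {g : ↥(Quot.mk (permRel (p * q + 1) Set.univ) ⁻¹' zetaFixed p (p * q + 1)) |
      Φ g.1.1 ∈ {v : Fin q → ℂ | Function.Injective v ∧ ∀ i, v i ∈ {z : ℂ | z ≠ 0}}}
      ∈ 𝓝 f₀ := by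
    apply IsOpen.mem_nhds
    · exact (isOpen_good q).preimage (hΦcont.comp hvalcont)
    · exact hmemGood
  exact Filter.eventuallyEq_of_mem hnhds fun g hg => (hclaim g hg).symm

end ZFP


/-- For a prime `p`, `q ≥ 1` and `n = pq + 1`, the fixed-point subspace `C_n(ℂ)^{ℤ/p}` (with
the subspace topology) is homeomorphic to the unordered configuration space
`C_q(ℂ∖{0})` of `q` points in the punctured plane. -/
theorem zetaFixed_succ_homeo_config_punctured (p q : ℕ) (hp : p.Prime) (hq : 1 ≤ q) :
    Nonempty (↥(zetaFixed p (p * q + 1)) ≃ₜ UConfig q {z : ℂ | z ≠ 0}) := by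
  exact ⟨{
    toEquiv := ⟨ZFP.Pmap p q hp, ZFP.Rmap p q hp, ZFP.R_P p q hp, ZFP.P_R p q hp⟩
    continuous_toFun := ZFP.continuous_Pmap p q hp
    continuous_invFun := ZFP.continuous_Rmap p q hp }⟩
end

section
/- The orbit space C_2(ℂ∖{0})/ℂ* of the unordered configuration space of two points in the punctured plane by the action of ℂ* (each nonzero complex scalar multiplying both points of a configuration) is homotopy equivalent to the circle S¹. -/
open Complex Topology

/-- The `ℂ*`-action relation on unordered configurations of two points in the punctured
plane: `d` is obtained from `c` by multiplying every point by the same `b ≠ 0`. -/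
def cstarRel (c d : UConfig 2 {z : ℂ | z ≠ 0}) : Prop :=
  ∃ b : ℂ, b ≠ 0 ∧ ∃ f g : OrdConfig 2 {z : ℂ | z ≠ 0},
    Quot.mk _ f = c ∧ Quot.mk _ g = d ∧ ∀ i, g.1 i = b * f.1 i

namespace CfgProof

abbrev X : Set ℂ := {z : ℂ | z ≠ 0}
abbrev Ord := OrdConfig 2 X
abbrev Q := Quot cstarRel
abbrev P := {u : ℂ // u ≠ 0}

lemma fz (f : Ord) : f.1 0 ≠ 0 := f.2.2 0
lemma fw (f : Ord) : f.1 1 ≠ 0 := f.2.2 1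
lemma fne (f : Ord) : f.1 0 ≠ f.1 1 := fun h => absurd (f.2.1 h) (by decide)

noncomputable def phi (f : Ord) : ℂ := (f.1 0 - f.1 1)^2 / (f.1 0 * f.1 1)

lemma phi_ne (f : Ord) : phi f ≠ 0 :=
  div_ne_zero (pow_ne_zero _ (sub_ne_zero.2 (fne f))) (mul_ne_zero (fz f) (fw f))

noncomputable def phiP (f : Ord) : P := ⟨phi f, phi_ne f⟩

lemma fin2cases (i : Fin 2) : i = 0 ∨ i = 1 := by fin_cases i <;> simp

lemma sound1 : ∀ f g : Ord, permRel 2 X f g → phiP f = phiP g := by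
  rintro f g ⟨σ, hσ⟩
  have h0 : g.1 0 = f.1 (σ 0) := by rw [hσ]; rfl
  have h1 : g.1 1 = f.1 (σ 1) := by rw [hσ]; rfl
  have hne : σ 0 ≠ σ 1 := fun h => absurd (σ.injective h) (by decide)
  have hz := fz f; have hw := fw f
  apply Subtype.ext
  show phi f = phi g
  rcases fin2cases (σ 0) with hs0 | hs0 <;> rcases fin2cases (σ 1) with hs1 | hs1
  · exact absurd (hs0.trans hs1.symm) hne
  · unfold phi; rw [h0, h1, hs0, hs1]
  · unfold phi; rw [h0, h1, hs0, hs1]; field_simp; ring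
  · exact absurd (hs0.trans hs1.symm) hne

lemma sound2 : ∀ c d, cstarRel c d →
    Quot.lift phiP sound1 c = Quot.lift phiP sound1 d := by
  rintro c d ⟨b, hb, f, g, rfl, rfl, hfg⟩
  show phiP f = phiP g
  apply Subtype.ext
  show phi f = phi g
  have h0 := hfg 0; have h1 := hfg 1
  have hz := fz f; have hw := fw f
  unfold phi
  rw [h0, h1]
  field_simp

noncomputable def Phat : Q → P := Quot.lift (Quot.lift phiP sound1) sound2

def q (f : Ord) : Q := Quot.mk _ (Quot.mk _ f)

lemma q_surj : Function.Surjective q := by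
  intro c
  obtain ⟨u, rfl⟩ := Quot.exists_rep c
  obtain ⟨f, rfl⟩ := Quot.exists_rep u
  exact ⟨f, rfl⟩

lemma Phat_q (f : Ord) : Phat (q f) = phiP f := rfl

lemma inj_of_ne {a b : ℂ} (h : a ≠ b) : Function.Injective ![a, b] := by
  intro i j hij
  fin_cases i <;> fin_cases j <;> simp_all

def mkCfg (z w : ℂ) (hz : z ≠ 0) (hw : w ≠ 0) (hzw : z ≠ w) : Ord :=
  ⟨![z, w], inj_of_ne hzw, by intro i; fin_cases i <;> simpa⟩
lemma inj_lemma (f g : Ord) (h : phiP f = phiP g) : q f = q g := by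
  have hz := fz f; have hw := fw f; have hz' := fz g; have hw' := fw g
  have hcross : (f.1 0 - f.1 1)^2 * (g.1 0 * g.1 1) = (g.1 0 - g.1 1)^2 * (f.1 0 * f.1 1) := by
    have h' : phi f = phi g := congrArg Subtype.val h
    unfold phi at h'
    rw [div_eq_div_iff (mul_ne_zero hz hw) (mul_ne_zero hz' hw')] at h'
    exact h'
  have key : (g.1 0 * f.1 1 - f.1 0 * g.1 1) * (g.1 0 * f.1 0 - g.1 1 * f.1 1) = 0 := by
    linear_combination -hcross
  rcases mul_eq_zero.1 key with hA | hB
  · -- g = b • f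
    refine Quot.sound ⟨g.1 0 / f.1 0, div_ne_zero hz' hz, f, g, rfl, rfl, ?_⟩
    intro i
    rcases fin2cases i with rfl | rfl
    · field_simp
    · field_simp
      linear_combination -hA
  · -- g = b • (f ∘ swap)
    set f' : Ord := ⟨f.1 ∘ Equiv.swap 0 1, f.2.1.comp (Equiv.swap 0 1).injective,
      fun i => f.2.2 _⟩ with hf'
    have hperm : Quot.mk (permRel 2 X) f = Quot.mk (permRel 2 X) f' :=
      Quot.sound ⟨Equiv.swap 0 1, rfl⟩
    have hf'0 : f'.1 0 = f.1 1 := by simp [hf']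
    have hf'1 : f'.1 1 = f.1 0 := by simp [hf']
    refine Quot.sound ⟨g.1 1 / f.1 0, div_ne_zero hw' hz, f', g, hperm.symm, rfl, ?_⟩
    intro i
    rcases fin2cases i with rfl | rfl
    · rw [hf'0]
      field_simp
      linear_combination hB
    · rw [hf'1]
      field_simp
lemma Phat_inj : Function.Injective Phat := by
  intro c d h
  obtain ⟨f, rfl⟩ := q_surj c
  obtain ⟨g, rfl⟩ := q_surj d
  exact inj_lemma f g h

lemma Phat_surj : Function.Surjective Phat := by
  intro u
  obtain ⟨v, hv⟩ := IsAlgClosed.exists_pow_nat_eq ((u.1 + 2)^2 - 4) (n := 2) two_pos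
  set r : ℂ := (u.1 + 2 + v) / 2 with hrdef
  have hr : r^2 - (u.1 + 2) * r + 1 = 0 := by
    rw [hrdef]
    field_simp
    linear_combination hv
  have hr0 : r ≠ 0 := by
    intro h0
    rw [h0] at hr
    norm_num at hr
  have hr1 : r ≠ 1 := by
    intro h1
    rw [h1] at hr
    exact u.2 (by linear_combination -hr)
  refine ⟨q (mkCfg r 1 hr0 one_ne_zero hr1), Subtype.ext ?_⟩
  show phi (mkCfg r 1 hr0 one_ne_zero hr1) = u.1
  unfold phi mkCfg
  simp only [Matrix.cons_val_zero, Matrix.cons_val_one, Matrix.head_cons]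
  field_simp
  linear_combination hr

lemma cont_phi : Continuous phi := by
  have c0 : Continuous fun f : Ord => f.1 0 := (continuous_apply 0).comp continuous_subtype_val
  have c1 : Continuous fun f : Ord => f.1 1 := (continuous_apply 1).comp continuous_subtype_val
  exact ((c0.sub c1).pow 2).div (c0.mul c1) fun f => mul_ne_zero (fz f) (fw f)

lemma cont_phiP : Continuous phiP := cont_phi.subtype_mk _

lemma cont_Phat : Continuous Phat :=
  continuous_quot_lift _ (continuous_quot_lift _ cont_phiP)
lemma open_phi : IsOpenMap phi := by
  rw [isOpenMap_iff_nhds_le]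
  intro f
  set z := f.1 0 with hzdef
  set w := f.1 1 with hwdef
  have hz : z ≠ 0 := fz f
  have hw : w ≠ 0 := fw f
  have hzw : z ≠ w := fne f
  set g : ℂ → ℂ := fun t => (t * z - w)^2 / (t * z * w) with hgdef
  have hg1 : g 1 = phi f := by simp [hgdef, phi, hzdef, hwdef]
  have hden : (1 : ℂ) * z * w ≠ 0 := by simp [hz, hw]
  have hga : AnalyticAt ℂ g 1 := by
    rw [hgdef]
    exact AnalyticAt.div
      (((analyticAt_id.mul analyticAt_const).sub analyticAt_const).pow 2)
      ((analyticAt_id.mul analyticAt_const).mul analyticAt_const) hden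
  rcases hga.eventually_constant_or_nhds_le_map_nhds with hev | hle
  · exfalso
    rw [Metric.eventually_nhds_iff] at hev
    obtain ⟨ε, hε, H⟩ := hev
    set δ : ℝ := min (ε / 2) (1 / 2) with hδdef
    have hδ : 0 < δ := lt_min (half_pos hε) (by norm_num)
    have hδε : δ < ε := (min_le_left _ _).trans_lt (half_lt_self hε)
    have hδhalf : δ ≤ 1 / 2 := min_le_right _ _
    have hδc : (δ : ℂ) ≠ 0 := by exact_mod_cast hδ.ne'
    have hd1 : dist (1 + (δ : ℂ)) 1 < ε := by
      have h' : (1 + (δ : ℂ)) - 1 = ((δ : ℝ) : ℂ) := by ring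
      rw [Complex.dist_eq, h', Complex.norm_real, Real.norm_eq_abs, abs_of_pos hδ]
      exact hδε
    have hd2 : dist (1 - (δ : ℂ)) 1 < ε := by
      have h' : (1 - (δ : ℂ)) - 1 = ((-δ : ℝ) : ℂ) := by push_cast; ring
      rw [Complex.dist_eq, h', Complex.norm_real, Real.norm_eq_abs, abs_neg, abs_of_pos hδ]
      exact hδε
    have ht1 : (1 + (δ : ℂ)) ≠ 0 := by
      intro h
      have h' : (δ : ℂ) = -1 := by linear_combination h
      have := congrArg Complex.re h'
      simp at this
      linarith
    have ht2 : (1 - (δ : ℂ)) ≠ 0 := by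
      intro h
      have h' : (δ : ℂ) = 1 := by linear_combination -h
      have := congrArg Complex.re h'
      simp at this
      linarith
    set c := g 1 with hcdef
    have key : ∀ t : ℂ, t ≠ 0 → g t = c → (t * z - w)^2 = c * (t * z * w) := by
      intro t ht hgt
      rw [hgdef] at hgt
      simp only at hgt
      rw [div_eq_iff (by simp [ht, hz, hw] : t * z * w ≠ 0)] at hgt
      exact hgt
    have E0 : ((1 : ℂ) * z - w)^2 = c * ((1 : ℂ) * z * w) := key 1 one_ne_zero rfl
    have E1 := key _ ht1 (H hd1)
    have E2 := key _ ht2 (H hd2)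
    have hzz : 2 * (δ : ℂ)^2 * z^2 = 0 := by linear_combination E1 + E2 - 2 * E0
    exact (mul_ne_zero (pow_ne_zero 2 hδc) (pow_ne_zero 2 hz))
      (by linear_combination hzz / 2)
  · rw [hg1] at hle
    refine le_trans hle ?_
    intro A hA
    rw [Filter.mem_map] at hA ⊢
    replace hA := (mem_nhds_induced Subtype.val f _).1 hA
    obtain ⟨U, hU, hUsub⟩ := hA
    set γ : ℂ → (Fin 2 → ℂ) := fun t => ![t * z, w] with hγdef
    have hγcont : Continuous γ := by
      apply continuous_pi
      intro i
      fin_cases i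
      · simpa [hγdef] using (continuous_mul_right z)
      · simpa [hγdef] using (continuous_const : Continuous fun _ : ℂ => w)
    have hγ1 : γ 1 = f.1 := by
      funext i
      fin_cases i <;> simp [hγdef, hzdef, hwdef]
    have h1 : γ ⁻¹' U ∈ 𝓝 (1 : ℂ) :=
      hγcont.continuousAt.preimage_mem_nhds (by rwa [hγ1])
    have h2 : {t : ℂ | t ≠ 0} ∈ 𝓝 (1 : ℂ) := isOpen_ne.mem_nhds one_ne_zero
    have h3 : {t : ℂ | t * z ≠ w} ∈ 𝓝 (1 : ℂ) :=
      (isOpen_ne.preimage (continuous_id.mul continuous_const)).mem_nhds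
        (by simpa using hzw)
    filter_upwards [h1, h2, h3] with t htU ht0 htw
    have hmem : ∀ i, γ t i ∈ X := by
      intro i
      fin_cases i
      · simpa [hγdef] using mul_ne_zero ht0 hz
      · simpa [hγdef] using hw
    set Ft : Ord := ⟨γ t, by simpa [hγdef] using inj_of_ne htw, hmem⟩ with hFt
    have hFtA : phi Ft ∈ A := hUsub (show Ft.1 ∈ U from htU)
    have hgt : g t = phi Ft := by
      simp [hgdef, phi, hFt, hγdef]
    show g t ∈ A
    rwa [hgt]
lemma cont_q : Continuous q := continuous_quot_mk.comp continuous_quot_mk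

lemma open_Phat : IsOpenMap Phat := by
  intro V hV
  have himg : Subtype.val '' (Phat '' V) = phi '' (q ⁻¹' V) := by
    ext x
    constructor
    · rintro ⟨p, ⟨cc, hcc, rfl⟩, rfl⟩
      obtain ⟨ff, rfl⟩ := q_surj cc
      exact ⟨ff, hcc, rfl⟩
    · rintro ⟨ff, hff, rfl⟩
      exact ⟨Phat (q ff), ⟨q ff, hff, rfl⟩, rfl⟩
  have hopen : IsOpen (phi '' (q ⁻¹' V)) := open_phi _ (hV.preimage cont_q)
  have : Phat '' V = Subtype.val ⁻¹' (phi '' (q ⁻¹' V)) := by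
    rw [← himg, Set.preimage_image_eq _ Subtype.val_injective]
  rw [this]
  exact hopen.preimage continuous_subtype_val

noncomputable def homeoQP : Q ≃ₜ P :=
  Equiv.toHomeomorphOfContinuousOpen
    (Equiv.ofBijective Phat ⟨Phat_inj, Phat_surj⟩) cont_Phat open_Phat

noncomputable def toCirc : C(P, Circle) where
  toFun u := ⟨u.1 / (‖u.1‖ : ℂ), by
    rw [Submonoid.unitSphere, Submonoid.mem_mk, Subsemigroup.mem_mk]
    simp only [Set.mem_setOf_eq, mem_sphere_zero_iff_norm]
    rw [norm_div]
    simp only [Complex.norm_real, norm_norm]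
    rw [div_self (norm_ne_zero_iff.mpr u.2)]⟩
  continuous_toFun := by
    apply Continuous.subtype_mk
    exact (continuous_subtype_val).div
      (Complex.continuous_ofReal.comp (continuous_norm.comp continuous_subtype_val))
      fun u => by simpa using norm_ne_zero_iff.mpr u.2

noncomputable def fromCirc : C(Circle, P) where
  toFun c := ⟨(c : ℂ), Circle.coe_ne_zero c⟩
  continuous_toFun := Continuous.subtype_mk continuous_subtype_val _

lemma toCirc_fromCirc : toCirc.comp fromCirc = ContinuousMap.id Circle := by
  ext c
  show ((c : ℂ) / (‖(c : ℂ)‖ : ℂ)) = (c : ℂ)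
  have h : ‖(c : ℂ)‖ = 1 := Circle.norm_coe c
  rw [h, Complex.ofReal_one, div_one]

noncomputable def homotopyPfun : C((unitInterval × P), P) where
  toFun p := ⟨(((p.1 : ℝ) + (1 - (p.1 : ℝ)) / ‖p.2.1‖ : ℝ) : ℂ) * p.2.1, by
    apply mul_ne_zero _ p.2.2
    rw [Complex.ofReal_ne_zero]
    have h1 : (0:ℝ) ≤ (p.1 : ℝ) := p.1.2.1
    have h2 : (p.1 : ℝ) ≤ 1 := p.1.2.2
    have h3 : 0 < ‖p.2.1‖ := norm_pos_iff.mpr p.2.2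
    have hpos : 0 < (p.1 : ℝ) + (1 - (p.1 : ℝ)) / ‖p.2.1‖ := by
      rcases eq_or_lt_of_le h1 with h | h
      · rw [← h]
        have h5 := div_pos (show (0:ℝ) < 1 by norm_num) h3
        simpa using h5
      · have h4 : 0 ≤ (1 - (p.1 : ℝ)) / ‖p.2.1‖ :=
          div_nonneg (by linarith) h3.le
        linarith
    exact ne_of_gt hpos⟩
  continuous_toFun := by
    apply Continuous.subtype_mk
    have ct : Continuous fun p : unitInterval × P => (p.1 : ℝ) :=
      continuous_subtype_val.comp continuous_fst
    have cu : Continuous fun p : unitInterval × P => p.2.1 :=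
      continuous_subtype_val.comp continuous_snd
    have cabs : Continuous fun p : unitInterval × P => ‖p.2.1‖ :=
      continuous_norm.comp cu
    exact (Complex.continuous_ofReal.comp
      (ct.add ((((continuous_const.sub ct)).div cabs)
        fun p => norm_ne_zero_iff.mpr p.2.2))).mul cu

noncomputable def homotopyP :
    ContinuousMap.Homotopy (fromCirc.comp toCirc) (ContinuousMap.id P) where
  toContinuousMap := homotopyPfun
  map_zero_left u := by
    apply Subtype.ext
    show (((0 : ℝ) + (1 - (0:ℝ)) / ‖u.1‖ : ℝ) : ℂ) * u.1
      = u.1 / (‖u.1‖ : ℂ)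
    have h3 : ‖u.1‖ ≠ 0 := norm_ne_zero_iff.mpr u.2
    push_cast
    field_simp
    ring
  map_one_left u := by
    apply Subtype.ext
    show (((1 : ℝ) + (1 - (1:ℝ)) / ‖u.1‖ : ℝ) : ℂ) * u.1 = u.1
    norm_num

noncomputable def hePC : ContinuousMap.HomotopyEquiv P Circle where
  toFun := toCirc
  invFun := fromCirc
  left_inv := ⟨homotopyP⟩
  right_inv := by rw [toCirc_fromCirc]

end CfgProof

/-- The orbit space `C_2(ℂ∖{0})/ℂ*` is homotopy equivalent to the circle `S¹`. -/
theorem config_punctured_mod_cstar_homotopyEquiv_circle :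
    Nonempty (ContinuousMap.HomotopyEquiv (Quot cstarRel) Circle) :=
  ⟨(CfgProof.homeoQP.toHomotopyEquiv).trans CfgProof.hePC⟩
end
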